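/- arXiv:1003.4588 — 10 statements merged into one kernel-verified Lean document; each statement's English description precedes it below -/
import Mathlib

section
/- Let n : ℝ → ℝ be differentiable, positive and decreasing on (0,∞), let N : (0,∞) → ℝ be an antiderivative of n (N'(x) = n(x) for all x > 0) with N(x) → −∞ as x → 0⁺, and let g : [0,∞) → ℝ be locally integrable. Then for every q0 > 0 and v0 ∈ ℝ there exists a unique continuously differentiable function q : [0,∞) → ℝ such that q(t) > 0 for all t ≥ 0, q(0) = q0, and q'(t) = v0 + N(q0) − N(q(t)) + ∫_0^t g(s) ds for all t ≥ 0 (this is the integrated form of the ODE q'' = −n(q)q' + g with initial data q(0) = q0, q'(0) = v0). -/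
open MeasureTheory Set Filter

theorem my_uniq {N : ℝ → ℝ} (hNmono : StrictMonoOn N (Ioi 0)) (h : ℝ → ℝ) {s : Set ℝ}
    (hconv : Convex ℝ s) (h0 : (0:ℝ) ∈ s) (hs_nonneg : ∀ t ∈ s, (0:ℝ) ≤ t)
    {q1 q2 : ℝ → ℝ}
    (hpos1 : ∀ t ∈ s, 0 < q1 t) (hpos2 : ∀ t ∈ s, 0 < q2 t)
    (heq0 : q1 0 = q2 0)
    (hd1 : ∀ t ∈ s, HasDerivWithinAt q1 (h t - N (q1 t)) s t)
    (hd2 : ∀ t ∈ s, HasDerivWithinAt q2 (h t - N (q2 t)) s t) :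
    EqOn q1 q2 s := by
  set φ : ℝ → ℝ := fun t => (q1 t - q2 t) ^ 2 with hφ
  have cont1 : ContinuousOn q1 s := fun t ht => (hd1 t ht).continuousWithinAt
  have cont2 : ContinuousOn q2 s := fun t ht => (hd2 t ht).continuousWithinAt
  have contφ : ContinuousOn φ s := ((cont1.sub cont2).pow 2)
  have hderiv : ∀ t ∈ interior s, HasDerivAt φ
      ((2:ℕ) * (q1 t - q2 t) ^ 1 * ((h t - N (q1 t)) - (h t - N (q2 t)))) t := by
    intro t ht
    have hts : t ∈ s := interior_subset ht
    have hns : s ∈ nhds t := mem_interior_iff_mem_nhds.1 ht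
    have h1 : HasDerivAt q1 (h t - N (q1 t)) t := (hd1 t hts).hasDerivAt hns
    have h2 : HasDerivAt q2 (h t - N (q2 t)) t := (hd2 t hts).hasDerivAt hns
    exact (h1.sub h2).pow 2
  have hdiff : DifferentiableOn ℝ φ (interior s) :=
    fun t ht => (hderiv t ht).differentiableAt.differentiableWithinAt
  have hnonpos : ∀ t ∈ interior s, deriv φ t ≤ 0 := by
    intro t ht
    rw [(hderiv t ht).deriv]
    push_cast
    simp only [pow_one]
    have hts : t ∈ s := interior_subset ht
    have hp1 := hpos1 t hts
    have hp2 := hpos2 t hts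
    rcases lt_trichotomy (q1 t) (q2 t) with hlt | heq | hgt
    · have := hNmono hp1 hp2 hlt
      nlinarith
    · rw [heq]; simp
    · have := hNmono hp2 hp1 hgt
      nlinarith
  have hanti : AntitoneOn φ s := antitoneOn_of_deriv_nonpos hconv contφ hdiff hnonpos
  intro t ht
  have h1 : φ t ≤ φ 0 := hanti h0 ht (hs_nonneg t ht)
  have h2 : φ 0 = 0 := by simp [hφ, heq0]
  have h3 : 0 ≤ φ t := sq_nonneg _
  have : φ t = 0 := le_antisymm (h2 ▸ h1) h3
  have := pow_eq_zero_iff (n := 2) (by norm_num) |>.1 this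
  exact sub_eq_zero.1 this


theorem my_exist (n N : ℝ → ℝ) (h : ℝ → ℝ)
    (hn_pos : ∀ x ∈ Ioi (0:ℝ), 0 < n x)
    (hn_anti : StrictAntiOn n (Ioi 0))
    (hN : ∀ x ∈ Ioi (0:ℝ), HasDerivAt N (n x) x)
    (hNmono : StrictMonoOn N (Ioi 0))
    (hN_bot : Tendsto N (nhdsWithin 0 (Ioi 0)) atBot)
    (q0 : ℝ) (hq0 : 0 < q0) (T : ℝ) (hT : 0 < T)
    (hcont : ContinuousOn h (Icc 0 T)) :
    ∃ q : ℝ → ℝ, q 0 = q0 ∧ ∀ t ∈ Icc (0:ℝ) T, 0 < q t ∧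
      HasDerivWithinAt q (h t - N (q t)) (Icc 0 T) t := by
  -- bound on h
  obtain ⟨C, hC⟩ := isCompact_Icc.exists_bound_of_continuousOn hcont
  set M : ℝ := max C 0 with hM_def
  have hM0 : 0 ≤ M := le_max_right _ _
  have hM : ∀ t ∈ Icc (0:ℝ) T, |h t| ≤ M := fun t ht => (hC t ht).trans (le_max_left _ _)
  -- small δ with N δ ≤ -M-1
  have hev : ∀ᶠ x in nhdsWithin 0 (Ioi 0), N x ≤ -M - 1 :=
    hN_bot.eventually (eventually_le_atBot (-M - 1))
  obtain ⟨u, hu, hsub⟩ := mem_nhdsGT_iff_exists_Ioc_subset.1 hev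
  set δ : ℝ := min u (q0 / 2) with hδ_def
  have hδpos : 0 < δ := lt_min hu (by linarith)
  have hNδ : N δ ≤ -M - 1 := hsub ⟨hδpos, min_le_left _ _⟩
  have hδq0 : δ < q0 := lt_of_le_of_lt (min_le_right _ _) (by linarith)
  set K : ℝ := M - N δ with hK_def
  have hK1 : 1 ≤ K := by simp only [hK_def]; linarith
  set Q : ℝ := q0 + K * T + 1 with hQ_def
  have hq0Q : q0 < Q := by nlinarith
  have hδQ : δ < Q := lt_trans hδq0 hq0Q
  -- clamp
  set cl : ℝ → ℝ := fun x => min Q (max δ x) with hcl_def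
  have hcl_mem : ∀ x, cl x ∈ Icc δ Q := by
    intro x
    exact ⟨le_min hδQ.le (le_max_left _ _), min_le_left _ _⟩
  have hcl_id : ∀ x, δ ≤ x → x ≤ Q → cl x = x := by
    intro x h1 h2
    simp only [hcl_def]
    rw [max_eq_right h1, min_eq_right h2]
  have hcl_lip : ∀ a b, |cl a - cl b| ≤ |a - b| := by
    intro a b
    have ha := le_abs_self (a - b)
    have hb := neg_abs_le (a - b)
    rw [abs_sub_le_iff]
    constructor <;> (simp only [hcl_def, min_def, max_def]; split_ifs <;> linarith)
  -- Lipschitz bound for N on [δ, ∞)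
  have hNlip : ∀ x y, δ ≤ x → x ≤ y → N x ≤ N y ∧ N y - N x ≤ n δ * (y - x) := by
    intro x y hx hxy
    rcases eq_or_lt_of_le hxy with rfl | hlt
    · exact ⟨le_rfl, by simp [mul_nonneg (hn_pos δ hδpos).le]⟩
    · have hxpos : (0:ℝ) < x := lt_of_lt_of_le hδpos hx
      have hcontN : ContinuousOn N (Icc x y) := fun z hz =>
        (hN z (lt_of_lt_of_le hxpos hz.1)).continuousAt.continuousWithinAt
      have hder : ∀ z ∈ Ioo x y, HasDerivAt N (n z) z := fun z hz =>
        hN z (lt_trans hxpos hz.1)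
      obtain ⟨c, hc, hceq⟩ := exists_hasDerivAt_eq_slope N n hlt hcontN hder
      have hcpos : (0:ℝ) < c := lt_trans hxpos hc.1
      have hcδ : n c ≤ n δ := le_of_lt (hn_anti hδpos hcpos (lt_of_le_of_lt hx hc.1))
      have hc0 : 0 < n c := hn_pos c hcpos
      have hslope : N y - N x = n c * (y - x) := by
        rw [hceq, div_mul_eq_mul_div, mul_div_assoc, div_self (sub_ne_zero.2 hlt.ne'), mul_one]
      constructor
      · nlinarith
      · rw [hslope]; nlinarith
  -- the clamped vector field
  set v : ℝ → ℝ → ℝ := fun t x => h t - N (cl x) with hv_def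
  have hNcl_lb : ∀ x, N δ ≤ N (cl x) := fun x => (hNlip δ (cl x) le_rfl (hcl_mem x).1).1
  have hNcl_ub : ∀ x, N (cl x) ≤ N Q := fun x => (hNlip (cl x) Q (hcl_mem x).1 (hcl_mem x).2).1
  set C0 : ℝ := M + max |N δ| |N Q| with hC0_def
  have hC00 : 0 ≤ C0 := by
    have := abs_nonneg (N δ)
    have := le_max_left |N δ| |N Q|
    simp only [hC0_def]; linarith
  set L : NNReal := (n δ).toNNReal with hL_def
  have hpl : IsPicardLindelof v (tmin := 0) (tmax := T) ⟨0, left_mem_Icc.2 hT.le⟩ q0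
      (C0 * T).toNNReal 0 C0.toNNReal L := by
    refine ⟨?_, ?_, ?_, ?_⟩
    · intro t _
      apply LipschitzOnWith.of_dist_le_mul
      intro x _ y _
      simp only [hv_def, Real.dist_eq]
      have h1 : h t - N (cl x) - (h t - N (cl y)) = N (cl y) - N (cl x) := by ring
      rw [h1]
      have hcoe : (L : ℝ) = n δ := Real.coe_toNNReal _ (hn_pos δ hδpos).le
      rw [hcoe]
      have key : ∀ a b : ℝ, cl a ≤ cl b → |N (cl b) - N (cl a)| ≤ n δ * |b - a| := by
        intro a b hab
        have h2 := hNlip (cl a) (cl b) (hcl_mem a).1 hab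
        have h3 : |N (cl b) - N (cl a)| = N (cl b) - N (cl a) := abs_of_nonneg (by linarith [h2.1])
        rw [h3]
        have h4 : cl b - cl a ≤ |b - a| := by
          have := hcl_lip b a
          have := le_abs_self (cl b - cl a)
          have : cl b - cl a ≤ |cl b - cl a| := le_abs_self _
          calc cl b - cl a ≤ |cl b - cl a| := le_abs_self _
            _ = |cl b - cl a| := rfl
            _ ≤ |b - a| := hcl_lip b a
        calc N (cl b) - N (cl a) ≤ n δ * (cl b - cl a) := h2.2
          _ ≤ n δ * |b - a| := by nlinarith [hn_pos δ hδpos]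
      rcases le_total (cl x) (cl y) with hxy | hxy
      · have := key x y hxy
        rwa [abs_sub_comm y x] at this
      · have := key y x hxy
        rwa [abs_sub_comm (N (cl x)) (N (cl y))] at this
    · intro x _
      exact hcont.sub continuousOn_const
    · intro t ht x _
      rw [Real.coe_toNNReal _ hC00]
      simp only [hv_def, Real.norm_eq_abs]
      have h1 := hM t ht
      have h2 : |N (cl x)| ≤ max |N δ| |N Q| := by
        rw [abs_le]
        constructor
        · have := neg_abs_le (N δ)
          have := le_max_left |N δ| |N Q|
          have := hNcl_lb x
          linarith
        · have := le_abs_self (N Q)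
          have := le_max_right |N δ| |N Q|
          have := hNcl_ub x
          linarith
      calc |h t - N (cl x)| ≤ |h t| + |N (cl x)| := abs_sub _ _
        _ ≤ C0 := by simp only [hC0_def]; linarith
    · have : max (T - 0) (0 - 0) = T := by
        simp [hT.le]
      simp [Real.coe_toNNReal _ hC00, Real.coe_toNNReal _ (mul_nonneg hC00 hT.le), hT.le]
  obtain ⟨f, hf0', hfd⟩ := hpl.exists_eq_forall_mem_Icc_hasDerivWithinAt₀
  have hf0 : f 0 = q0 := hf0'
  have hfc : ContinuousOn f (Icc 0 T) := fun t ht => (hfd t ht).continuousWithinAt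
  -- lower barrier
  have hlow : ∀ t ∈ Icc (0:ℝ) T, δ ≤ f t := by
    by_contra hcon
    push_neg at hcon
    obtain ⟨t, ht, hft⟩ := hcon
    set S : Set ℝ := Icc 0 t ∩ f ⁻¹' (Ici δ) with hS_def
    have hS0 : (0:ℝ) ∈ S := ⟨⟨le_rfl, ht.1⟩, by simp [hf0, hδq0.le]⟩
    have hSne : S.Nonempty := ⟨0, hS0⟩
    have hSbdd : BddAbove S := ⟨t, fun u hu => hu.1.2⟩
    have hIccsub : Icc (0:ℝ) t ⊆ Icc 0 T := Icc_subset_Icc le_rfl ht.2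
    have hSclosed : IsClosed S :=
      (hfc.mono hIccsub).preimage_isClosed_of_isClosed isClosed_Icc isClosed_Ici
    set s := sSup S with hs_def
    have hsS : s ∈ S := hSclosed.csSup_mem hSne hSbdd
    have hfs : δ ≤ f s := hsS.2
    have hst : s < t := by
      rcases lt_or_eq_of_le hsS.1.2 with h1 | h1
      · exact h1
      · exfalso; rw [h1] at hfs; linarith
    have hbelow : ∀ u, s < u → u ≤ t → f u < δ := by
      intro u h1 h2
      by_contra h3
      push_neg at h3
      have : u ∈ S := ⟨⟨le_trans hsS.1.1 h1.le, h2⟩, h3⟩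
      have := le_csSup hSbdd this
      linarith
    have hmono : StrictMonoOn f (Icc s t) := by
      apply strictMonoOn_of_deriv_pos (convex_Icc s t)
      · exact hfc.mono (Icc_subset_Icc hsS.1.1 ht.2)
      · intro x hx
        rw [interior_Icc] at hx
        have hx0 : 0 < x := lt_of_le_of_lt hsS.1.1 hx.1
        have hxT : x < T := lt_of_lt_of_le hx.2 ht.2
        have hxmem : x ∈ Icc (0:ℝ) T := ⟨hx0.le, hxT.le⟩
        have hder : HasDerivAt f (v x (f x)) x :=
          (hfd x hxmem).hasDerivAt (Icc_mem_nhds hx0 hxT)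
        rw [hder.deriv]
        have hfx : f x < δ := hbelow x hx.1 hx.2.le
        have hclx : cl (f x) = δ := by
          simp only [hcl_def]
          rw [max_eq_left hfx.le, min_eq_right hδQ.le]
        simp only [hv_def, hclx]
        have := hM x hxmem
        have := neg_abs_le (h x)
        linarith
    have : f s < f t := hmono ⟨le_rfl, hst.le⟩ ⟨hst.le, le_rfl⟩ hst
    linarith
  -- upper bound
  have hupp : ∀ t ∈ Icc (0:ℝ) T, f t ≤ q0 + K * t := by
    set ψ : ℝ → ℝ := fun u => q0 + K * u - f u with hψ_def
    have hψd : ∀ u ∈ interior (Icc (0:ℝ) T), HasDerivAt ψ (K - v u (f u)) u := by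
      intro u hu
      rw [interior_Icc] at hu
      have humem : u ∈ Icc (0:ℝ) T := ⟨hu.1.le, hu.2.le⟩
      have hf' : HasDerivAt f (v u (f u)) u :=
        (hfd u humem).hasDerivAt (Icc_mem_nhds hu.1 hu.2)
      have h1 : HasDerivAt (fun u : ℝ => q0 + K * u) K u := by
        simpa using ((hasDerivAt_id u).const_mul K).const_add q0
      exact h1.sub hf'
    have hψmono : MonotoneOn ψ (Icc 0 T) := by
      apply monotoneOn_of_deriv_nonneg (convex_Icc 0 T)
      · exact (continuousOn_const.add (continuousOn_const.mul continuousOn_id)).sub hfc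
      · exact fun u hu => (hψd u hu).differentiableAt.differentiableWithinAt
      · intro u hu
        rw [(hψd u hu).deriv]
        rw [interior_Icc] at hu
        have humem : u ∈ Icc (0:ℝ) T := ⟨hu.1.le, hu.2.le⟩
        have h1 : h u ≤ M := le_trans (le_abs_self _) (hM u humem)
        have h2 := hNcl_lb (f u)
        simp only [hv_def, hK_def]
        linarith
    intro t ht
    have := hψmono (left_mem_Icc.2 hT.le) ht ht.1
    simp only [hψ_def, hf0] at this
    linarith
  refine ⟨f, hf0, fun t ht => ?_⟩
  have h1 : δ ≤ f t := hlow t ht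
  have h2 : f t ≤ Q := by
    have := hupp t ht
    have : K * t ≤ K * T := by nlinarith [ht.2]
    have := hupp t ht
    simp only [hQ_def]
    nlinarith
  have hcleq : cl (f t) = f t := hcl_id _ h1 h2
  refine ⟨lt_of_lt_of_le hδpos h1, ?_⟩
  have := hfd t ht
  simp only [hv_def, hcleq] at this
  exact this



/-- Well-posedness of the model ODE `q'' = -n(q) q' + g` in integrated form:
for a differentiable, positive, decreasing drag coefficient `n` on `(0,∞)` with
antiderivative `N` tending to `-∞` at `0⁺`, and a locally integrable forcing `g`,
there is, for any initial data `q(0) = q0 > 0`, `q'(0) = v0`, a unique positive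
continuously differentiable solution on `[0,∞)` of
`q'(t) = v0 + N(q0) - N(q(t)) + ∫_0^t g`. -/
theorem stmt_0 (n N g : ℝ → ℝ)
    (hn_diff : ∀ x ∈ Ioi (0:ℝ), DifferentiableAt ℝ n x)
    (hn_pos : ∀ x ∈ Ioi (0:ℝ), 0 < n x)
    (hn_anti : StrictAntiOn n (Ioi 0))
    (hN : ∀ x ∈ Ioi (0:ℝ), HasDerivAt N (n x) x)
    (hN_bot : Tendsto N (nhdsWithin 0 (Ioi 0)) atBot)
    (hg : LocallyIntegrableOn g (Ici 0))
    (q0 v0 : ℝ) (hq0 : 0 < q0) :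
    (∃ q : ℝ → ℝ, (∀ t ∈ Ici (0:ℝ), 0 < q t) ∧ q 0 = q0 ∧
      (∀ t ∈ Ici (0:ℝ),
        HasDerivWithinAt q (v0 + N q0 - N (q t) + ∫ s in (0:ℝ)..t, g s) (Ici 0) t)) ∧
    (∀ q1 q2 : ℝ → ℝ,
      ((∀ t ∈ Ici (0:ℝ), 0 < q1 t) ∧ q1 0 = q0 ∧
        (∀ t ∈ Ici (0:ℝ),
          HasDerivWithinAt q1 (v0 + N q0 - N (q1 t) + ∫ s in (0:ℝ)..t, g s) (Ici 0) t)) →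
      ((∀ t ∈ Ici (0:ℝ), 0 < q2 t) ∧ q2 0 = q0 ∧
        (∀ t ∈ Ici (0:ℝ),
          HasDerivWithinAt q2 (v0 + N q0 - N (q2 t) + ∫ s in (0:ℝ)..t, g s) (Ici 0) t)) →
      EqOn q1 q2 (Ici 0)) := by
  set h : ℝ → ℝ := fun t => v0 + N q0 + ∫ s in (0:ℝ)..t, g s with hh_def
  have hvall : ∀ (q : ℝ → ℝ) (t : ℝ), v0 + N q0 - N (q t) + ∫ s in (0:ℝ)..t, g s
      = h t - N (q t) := by intro q t; simp only [hh_def]; ring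
  have hNmono : StrictMonoOn N (Ioi 0) := by
    apply strictMonoOn_of_deriv_pos (convex_Ioi 0)
    · exact fun x hx => (hN x hx).continuousAt.continuousWithinAt
    · intro x hx
      rw [interior_Ioi] at hx
      rw [(hN x hx).deriv]
      exact hn_pos x hx
  have hcontall : ∀ T : ℝ, 0 < T → ContinuousOn h (Icc 0 T) := by
    intro T hT
    have hint : IntegrableOn g (Icc 0 T) := hg.integrableOn_compact_subset
      (Icc_subset_Ici_self) isCompact_Icc
    have h1 : ContinuousOn (fun t => ∫ s in (0:ℝ)..t, g s) (Icc 0 T) := by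
      have := intervalIntegral.continuousOn_primitive_interval
        (a := 0) (b := T) (μ := volume) (f := g) (by rwa [uIcc_of_le hT.le])
      rwa [uIcc_of_le hT.le] at this
    exact continuousOn_const.add h1
  -- solutions on [0, k+1]
  have hex : ∀ k : ℕ, ∃ q : ℝ → ℝ, q 0 = q0 ∧ ∀ t ∈ Icc (0:ℝ) ((k:ℝ)+1), 0 < q t ∧
      HasDerivWithinAt q (h t - N (q t)) (Icc 0 ((k:ℝ)+1)) t := by
    intro k
    exact my_exist n N h hn_pos hn_anti hN hNmono hN_bot q0 hq0 ((k:ℝ)+1)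
      (by positivity) (hcontall _ (by positivity))
  choose sol hsol0 hsolP using hex
  have hsolPos : ∀ k : ℕ, ∀ t ∈ Icc (0:ℝ) ((k:ℝ)+1), 0 < sol k t :=
    fun k t ht => (hsolP k t ht).1
  have hsolD : ∀ k : ℕ, ∀ t ∈ Icc (0:ℝ) ((k:ℝ)+1),
      HasDerivWithinAt (sol k) (h t - N (sol k t)) (Icc 0 ((k:ℝ)+1)) t :=
    fun k t ht => (hsolP k t ht).2
  -- consistency
  have hcons : ∀ k m : ℕ, k ≤ m → EqOn (sol k) (sol m) (Icc 0 ((k:ℝ)+1)) := by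
    intro k m hkm
    have hsub : Icc (0:ℝ) ((k:ℝ)+1) ⊆ Icc 0 ((m:ℝ)+1) :=
      Icc_subset_Icc le_rfl (by have := (Nat.cast_le (α := ℝ)).2 hkm; linarith)
    apply my_uniq hNmono h (convex_Icc _ _) (left_mem_Icc.2 (by positivity))
      (fun t ht => ht.1)
      (fun t ht => hsolPos k t ht) (fun t ht => hsolPos m t (hsub ht))
      (by rw [hsol0 k, hsol0 m])
      (fun t ht => hsolD k t ht)
      (fun t ht => (hsolD m t (hsub ht)).mono hsub)
  set qq : ℝ → ℝ := fun t => sol ⌊t⌋₊ t with hqq_def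
  have hmemfloor : ∀ t : ℝ, 0 ≤ t → t ∈ Icc (0:ℝ) ((⌊t⌋₊:ℝ)+1) :=
    fun t ht => ⟨ht, (Nat.lt_floor_add_one t).le⟩
  have hagree : ∀ k : ℕ, EqOn qq (sol k) (Icc 0 ((k:ℝ)+1)) := by
    intro k s hs
    simp only [hqq_def]
    rcases le_total (⌊s⌋₊) k with hjk | hjk
    · exact hcons ⌊s⌋₊ k hjk (hmemfloor s hs.1)
    · exact (hcons k ⌊s⌋₊ hjk hs).symm
  have hqq0 : qq 0 = q0 := by
    simp only [hqq_def, Nat.floor_zero]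
    exact hsol0 0
  have hqqpos : ∀ t ∈ Ici (0:ℝ), 0 < qq t := by
    intro t ht
    exact hsolPos ⌊t⌋₊ t (hmemfloor t ht)
  have hqqD : ∀ t ∈ Ici (0:ℝ), HasDerivWithinAt qq (h t - N (qq t)) (Ici 0) t := by
    intro t ht
    set k := ⌊t⌋₊ with hk_def
    have hmem : Icc (0:ℝ) ((k:ℝ)+1) ∈ nhdsWithin t (Ici 0) := by
      rw [← Ici_inter_Iic]
      exact inter_mem self_mem_nhdsWithin
        (mem_nhdsWithin_of_mem_nhds (Iic_mem_nhds (Nat.lt_floor_add_one t)))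
    have hD : HasDerivWithinAt (sol k) (h t - N (sol k t)) (Ici 0) t :=
      (hsolD k t (hmemfloor t ht)).mono_of_mem_nhdsWithin hmem
    have heq : qq t = sol k t := hagree k (hmemfloor t ht)
    rw [← heq] at hD
    exact hD.congr_of_eventuallyEq (Filter.eventuallyEq_of_mem hmem (hagree k)) heq
  constructor
  · refine ⟨qq, hqqpos, hqq0, fun t ht => ?_⟩
    rw [hvall qq t]
    exact hqqD t ht
  · rintro q1 q2 ⟨hp1, h01, hd1⟩ ⟨hp2, h02, hd2⟩
    apply my_uniq hNmono h (convex_Ici 0) self_mem_Ici (fun t ht => ht)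
      hp1 hp2 (by rw [h01, h02])
    · intro t ht
      rw [← hvall q1 t]
      exact hd1 t ht
    · intro t ht
      rw [← hvall q2 t]
      exact hd2 t ht
end

section
/- Let q be a solution of the model ODE on [t1, t2] (in the integrated sense) with q(t1) = q(t2) = q_s, q(t) ≤ q_s for all t ∈ [t1, t2], and q'(t2) ≥ 0. Then there exists t̄ ∈ [t1, t2] such that v̄(t̄) = 0, where v̄(t) = q'(t1) + ∫_{t1}^t g(s) ds. Consequently the first time t̄2 ≥ t1 at which v̄ vanishes satisfies t̄2 ≤ t2. -/
open MeasureTheory Set Filter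

/-- If a solution of the model ODE (in integrated form, with derivative `v`)
satisfies `q(t1) = q(t2) = q_s`, `q ≤ q_s` on `[t1,t2]`, `q'(t1) ≤ 0` and
`q'(t2) ≥ 0`, then the auxiliary velocity `v̄(t) = q'(t1) + ∫_{t1}^t g` vanishes
somewhere in `[t1,t2]`; consequently the first zero `t̄2 ≥ t1` of `v̄`
satisfies `t̄2 ≤ t2`. -/
theorem stmt_1 (n N g q v : ℝ → ℝ) (q_s t1 t2 : ℝ)
    (hn_pos : ∀ x ∈ Ioi (0:ℝ), 0 < n x)
    (hn_anti : StrictAntiOn n (Ioi 0))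
    (hN : ∀ x ∈ Ioi (0:ℝ), HasDerivAt N (n x) x)
    (hg : IntegrableOn g (Icc t1 t2))
    (ht12 : t1 ≤ t2)
    (hq_pos : ∀ t ∈ Icc t1 t2, 0 < q t)
    (hqv : ∀ t ∈ Icc t1 t2, HasDerivAt q (v t) t)
    (hode : ∀ s ∈ Icc t1 t2, ∀ t ∈ Icc t1 t2, s ≤ t →
      v t = v s + N (q s) - N (q t) + ∫ u in s..t, g u)
    (hq1 : q t1 = q_s) (hq2 : q t2 = q_s)
    (hle : ∀ t ∈ Icc t1 t2, q t ≤ q_s)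
    (hv1 : v t1 ≤ 0) (hv2 : 0 ≤ v t2) :
    (∃ tb ∈ Icc t1 t2, v t1 + (∫ s in t1..tb, g s) = 0) ∧
    (∀ tb2 : ℝ, IsLeast {t : ℝ | t1 ≤ t ∧ v t1 + (∫ s in t1..t, g s) = 0} tb2 →
      tb2 ≤ t2) := by
  have ht1 : t1 ∈ Icc t1 t2 := ⟨le_refl _, ht12⟩
  have ht2 : t2 ∈ Icc t1 t2 := ⟨ht12, le_refl _⟩
  have heq : v t2 = v t1 + ∫ u in t1..t2, g u := by
    have := hode t1 ht1 t2 ht2 ht12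
    rw [hq1, hq2] at this
    linarith
  set f : ℝ → ℝ := fun t => v t1 + ∫ s in t1..t, g s with hf
  have hguIcc : IntegrableOn g (uIcc t1 t2) := by rwa [uIcc_of_le ht12]
  have hcont : ContinuousOn f (Icc t1 t2) := by
    have := intervalIntegral.continuousOn_primitive_interval (a := t1) (b := t2) hguIcc
    rw [uIcc_of_le ht12] at this
    exact continuousOn_const.add this
  have hf1 : f t1 ≤ 0 := by simp [hf, hv1]
  have hf2 : 0 ≤ f t2 := by simpa [hf, ← heq] using hv2
  have h0 : (0:ℝ) ∈ Icc (f t1) (f t2) := ⟨hf1, hf2⟩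
  obtain ⟨tb, htb, htb0⟩ := intermediate_value_Icc ht12 hcont h0
  refine ⟨⟨tb, htb, htb0⟩, ?_⟩
  intro tb2 hleast
  exact le_trans (hleast.2 ⟨htb.1, htb0⟩) htb.2
end

section
/- Let g : [t1, t2] → ℝ be continuous, and let q : [t1, t2] → (0, q_s] be twice differentiable with q''(t) = −n(q(t)) q'(t) + g(t) for all t ∈ [t1, t2], q(t1) = q(t2) = q_s, and q'(t1) ≤ 0. Then for every t ∈ [t1, t2] one has max(q'(t), 0) ≤ (sup_{s ∈ [t1,t2]} max(g(s), 0)) / n(q_s). In particular, if q'(t2) ≥ 0 then 0 ≤ q'(t2) ≤ (sup_{s ∈ [t1,t2]} max(g(s), 0)) / n(q_s). -/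
open MeasureTheory Set Filter

/-- Bound on the positive part of the velocity in the lubrication regime:
if `q'' = -n(q) q' + g` on `[t1,t2]` with `q` taking values in `(0, q_s]`,
`q(t1) = q(t2) = q_s`, `q'(t1) ≤ 0`, then
`max(q'(t),0) ≤ (sup_{[t1,t2]} max(g,0)) / n(q_s)` on `[t1,t2]`;
in particular if `q'(t2) ≥ 0` then `q'(t2) ≤ (sup max(g,0)) / n(q_s)`. -/
theorem stmt_2 (n g q v : ℝ → ℝ) (q_s t1 t2 : ℝ)
    (hn_diff : ∀ x ∈ Ioi (0:ℝ), DifferentiableAt ℝ n x)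
    (hn_pos : ∀ x ∈ Ioi (0:ℝ), 0 < n x)
    (hn_anti : StrictAntiOn n (Ioi 0))
    (hqs : 0 < q_s) (ht12 : t1 ≤ t2)
    (hg_cont : ContinuousOn g (Icc t1 t2))
    (hq_mem : ∀ t ∈ Icc t1 t2, q t ∈ Ioc 0 q_s)
    (hqv : ∀ t ∈ Icc t1 t2, HasDerivAt q (v t) t)
    (hv' : ∀ t ∈ Icc t1 t2, HasDerivAt v (-n (q t) * v t + g t) t)
    (hq1 : q t1 = q_s) (hq2 : q t2 = q_s) (hv1 : v t1 ≤ 0) :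
    (∀ t ∈ Icc t1 t2,
      max (v t) 0 ≤ sSup ((fun s => max (g s) 0) '' Icc t1 t2) / n q_s) ∧
    (0 ≤ v t2 → v t2 ≤ sSup ((fun s => max (g s) 0) '' Icc t1 t2) / n q_s) := by
  set G := sSup ((fun s => max (g s) 0) '' Icc t1 t2) with hG
  have hns : 0 < n q_s := hn_pos q_s hqs
  have ht1mem : t1 ∈ Icc t1 t2 := ⟨le_refl _, ht12⟩
  have hbdd : BddAbove ((fun s => max (g s) 0) '' Icc t1 t2) := by
    apply IsCompact.bddAbove_image isCompact_Icc
    exact fun s hs => (hg_cont s hs).max continuousWithinAt_const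
  have hGmem : ∀ s ∈ Icc t1 t2, max (g s) 0 ≤ G := fun s hs =>
    le_csSup hbdd (mem_image_of_mem _ hs)
  have hG0 : 0 ≤ G := le_trans (le_max_right _ _) (hGmem t1 ht1mem)
  set M := G / n q_s with hM
  have hM0 : 0 ≤ M := div_nonneg hG0 hns.le
  -- key : v t ≤ M on Icc
  have key : ∀ t ∈ Icc t1 t2, v t ≤ M := by
    intro t ht
    have hcont : ContinuousOn v (Icc t1 t2) := fun s hs =>
      (hv' s hs).continuousAt.continuousWithinAt
    have hle : ∀ ε > 0, v t ≤ M + ε := by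
      intro ε hε
      have := image_le_of_deriv_right_lt_deriv_boundary (f := v)
        (f' := fun s => -n (q s) * v s + g s) (a := t1) (b := t2)
        hcont (fun x hx => (hv' x (Ico_subset_Icc_self hx)).hasDerivWithinAt)
        (B := fun _ => M + ε) (B' := fun _ => 0)
        (show v t1 ≤ M + ε by linarith) (fun x => hasDerivAt_const x (M + ε)) ?_ ht
      · exact this
      · intro x hx hvx
        have hxI : x ∈ Icc t1 t2 := Ico_subset_Icc_self hx
        have hq : q x ∈ Ioc 0 q_s := hq_mem x hxI
        have hnq : n q_s ≤ n (q x) := by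
          rcases eq_or_lt_of_le hq.2 with h | h
          · rw [h]
          · exact (hn_anti hq.1 hqs h).le
        have hvpos : 0 < v x := by rw [hvx]; positivity
        have h1 : -n (q x) * v x ≤ -n q_s * v x := by nlinarith
        have h2 : g x ≤ G := le_trans (le_max_left _ _) (hGmem x hxI)
        have : -n (q x) * v x + g x ≤ -n q_s * (M + ε) + G := by
          rw [← hvx]; linarith
        have hMG : n q_s * M = G := by rw [hM, mul_div_cancel₀ _ hns.ne']
        nlinarith
    by_contra h
    push_neg at h
    have := hle ((v t - M) / 2) (by linarith)
    linarith
  refine ⟨fun t ht => max_le (key t ht) hM0, fun h => key t2 ⟨ht12, le_refl _⟩⟩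
end

section
/- Assume the piecewise forcing: g(t) = g_-(t) for t ≤ t0 and g(t) = g_+ for t > t0, with t0 > 0, g_+ > 0 constant and g_-(t) < 0 for all t. Let q : [0,∞) → (0,∞) be continuously differentiable, satisfy the integrated equation, and be twice differentiable with q''(t) = −n(q(t))q'(t) + g(t) for all t ≠ t0. Let t1 < t2 satisfy q(t1) = q(t2) = q_s, q'(t1) < 0, q(t) ≤ q_s on [t1, t2] and q'(t2) ≥ 0, and let t̄2 be the first time t ≥ t1 with v̄(t) = 0. Then t0 ≤ t̄2 ≤ t2, q'(t2) = g_+ · (t2 − t̄2), and 0 ≤ t2 − t̄2 ≤ 1/n(q_s). -/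
open MeasureTheory Set Filter

/-- For the piecewise forcing `g = g_- < 0` on `(-∞,t0]`, `g = g_+ > 0` on `(t0,∞)`,
a solution `q` of the model ODE with `q(t1) = q(t2) = q_s`, `q'(t1) < 0`,
`q ≤ q_s` on `[t1,t2]`, `q'(t2) ≥ 0`, and `t̄2` the first zero of
`v̄(t) = q'(t1) + ∫_{t1}^t g`, satisfies
`t0 ≤ t̄2 ≤ t2`, `q'(t2) = g_+ (t2 - t̄2)` and `0 ≤ t2 - t̄2 ≤ 1/n(q_s)`. -/
theorem stmt_3 (n N g gm q v : ℝ → ℝ) (gp t0 q_s t1 t2 tb2 : ℝ)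
    (hn_diff : ∀ x ∈ Ioi (0:ℝ), DifferentiableAt ℝ n x)
    (hn_pos : ∀ x ∈ Ioi (0:ℝ), 0 < n x)
    (hn_anti : StrictAntiOn n (Ioi 0))
    (hN : ∀ x ∈ Ioi (0:ℝ), HasDerivAt N (n x) x)
    (ht0 : 0 < t0) (hgp : 0 < gp)
    (hgm : ∀ t, gm t < 0)
    (hg_def : ∀ t, g t = if t ≤ t0 then gm t else gp)
    (hg_loc : LocallyIntegrable g)
    (hq_pos : ∀ t ∈ Ici (0:ℝ), 0 < q t)
    (hqv : ∀ t ∈ Ici (0:ℝ), HasDerivAt q (v t) t)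
    (hode : ∀ s ∈ Ici (0:ℝ), ∀ t ∈ Ici (0:ℝ), s ≤ t →
      v t = v s + N (q s) - N (q t) + ∫ u in s..t, g u)
    (hv' : ∀ t ∈ Ici (0:ℝ), t ≠ t0 → HasDerivAt v (-n (q t) * v t + g t) t)
    (hqs : 0 < q_s)
    (ht1 : 0 ≤ t1) (ht12 : t1 < t2)
    (hq1 : q t1 = q_s) (hq2 : q t2 = q_s)
    (hv1 : v t1 < 0) (hv2 : 0 ≤ v t2)
    (hle : ∀ t ∈ Icc t1 t2, q t ≤ q_s)
    (htb2 : IsLeast {t : ℝ | t1 ≤ t ∧ v t1 + (∫ s in t1..t, g s) = 0} tb2) :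
    t0 ≤ tb2 ∧ tb2 ≤ t2 ∧ v t2 = gp * (t2 - tb2) ∧
      0 ≤ t2 - tb2 ∧ t2 - tb2 ≤ 1 / n q_s := by
  have hgI : ∀ a b : ℝ, IntervalIntegrable g volume a b := fun a b =>
    (hg_loc.integrableOn_isCompact isCompact_uIcc).intervalIntegrable
  have hg_le : ∀ t, g t ≤ gp := by
    intro t; rw [hg_def t]
    split
    · exact (hgm t).le.trans hgp.le
    · exact le_rfl
  have hcpos : 0 < n q_s := hn_pos q_s hqs
  have ht2 : (0:ℝ) ≤ t2 := ht1.trans ht12.le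
  have hsub : ∀ t ∈ Icc t1 t2, t ∈ Ici (0:ℝ) := fun t ht => ht1.trans ht.1
  set vb : ℝ → ℝ := fun t => v t1 + ∫ s in t1..t, g s with hvb_def
  have hvb_cont : Continuous vb :=
    continuous_const.add (intervalIntegral.continuous_primitive hgI t1)
  have hvb1 : vb t1 = v t1 := by simp [vb]
  have hvb2 : vb t2 = v t2 := by
    have h := hode t1 ht1 t2 ht2 ht12.le
    rw [hq1, hq2] at h
    simp only [vb]
    rw [h]; ring
  have htb1 : t1 ≤ tb2 := htb2.1.1
  have hvbtb2 : vb tb2 = 0 := htb2.1.2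
  -- tb2 ≤ t2
  have h1 : tb2 ≤ t2 := by
    have h0mem : (0:ℝ) ∈ Icc (vb t1) (vb t2) := by
      constructor
      · rw [hvb1]; exact hv1.le
      · rw [hvb2]; exact hv2
    obtain ⟨c', hc'mem, hc'⟩ := intermediate_value_Icc ht12.le hvb_cont.continuousOn h0mem
    exact (htb2.2 ⟨hc'mem.1, hc'⟩).trans hc'mem.2
  -- t0 ≤ tb2
  have h0 : t0 ≤ tb2 := by
    by_contra h
    push_neg at h
    have hint : (∫ s in t1..tb2, g s) ≤ 0 := by
      have : 0 ≤ ∫ s in t1..tb2, -g s := by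
        apply intervalIntegral.integral_nonneg htb1
        intro u hu
        have : u ≤ t0 := hu.2.trans h.le
        rw [hg_def u, if_pos this]
        linarith [hgm u]
      rw [intervalIntegral.integral_neg] at this
      linarith
    have := hvbtb2
    simp only [vb] at this
    linarith
  -- v t2 = gp * (t2 - tb2)
  have hsplit : (∫ s in t1..t2, g s) = (∫ s in t1..tb2, g s) + ∫ s in tb2..t2, g s :=
    (intervalIntegral.integral_add_adjacent_intervals (hgI t1 tb2) (hgI tb2 t2)).symm
  have htail : (∫ s in tb2..t2, g s) = gp * (t2 - tb2) := by
    rw [intervalIntegral.integral_of_le h1,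
      setIntegral_congr_fun measurableSet_Ioc
        (fun u hu => by rw [hg_def u, if_neg (by push_neg; exact lt_of_le_of_lt h0 hu.1)]),
      setIntegral_const, Real.volume_real_Ioc_of_le h1, smul_eq_mul,
      mul_comm]
  have hC : v t2 = gp * (t2 - tb2) := by
    have h := hvb2
    simp only [vb] at h hvbtb2
    rw [hsplit] at h
    rw [← h, htail]; linarith
  refine ⟨h0, h1, hC, by linarith, ?_⟩
  -- main bound
  -- continuity facts
  have hq_cont : ∀ t ∈ Ici (0:ℝ), ContinuousAt q t := fun t ht => (hqv t ht).continuousAt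
  have hm_cont : ∀ t ∈ Ici (0:ℝ), ContinuousAt (fun s => n (q s)) t := fun t ht =>
    ((hn_diff (q t) (hq_pos t ht)).continuousAt).comp (hq_cont t ht)
  have hm_contOn : ∀ a b : ℝ, 0 ≤ a → ContinuousOn (fun s => n (q s)) (Icc a b) :=
    fun a b ha t ht => (hm_cont t (ha.trans ht.1)).continuousWithinAt
  set P : ℝ → ℝ := fun t => ∫ s in t1..t, n (q s) with hP_def
  have hP_cont : ContinuousOn P (Icc t1 t2) := by
    have h := intervalIntegral.continuousOn_primitive_interval
      (f := fun s => n (q s)) (a := t1) (b := t2) (μ := volume)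
      (by rw [uIcc_of_le ht12.le]; exact (hm_contOn t1 t2 ht1).integrableOn_Icc)
    rwa [uIcc_of_le ht12.le] at h
  have hP_deriv : ∀ t ∈ Ioo t1 t2, HasDerivAt P (n (q t)) t := by
    intro t ht
    have htpos : (0:ℝ) < t := lt_of_le_of_lt ht1 ht.1
    refine intervalIntegral.integral_hasDerivAt_right
      ((hm_contOn t1 t ht1).intervalIntegrable_of_Icc ht.1.le) ?_ (hm_cont t htpos.le)
    exact ContinuousOn.stronglyMeasurableAtFilter isOpen_Ioi
      (fun s hs => (hm_cont s (le_of_lt hs)).continuousWithinAt) t htpos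
  have hμ_cont : ContinuousOn (fun t => Real.exp (P t)) (Icc t1 t2) :=
    Real.continuous_exp.comp_continuousOn hP_cont
  have hP1 : P t1 = 0 := by simp [P]
  -- v is continuous on [t1, t2]
  have hvexpr : ∀ t ∈ Icc t1 t2, v t = v t1 + N q_s - N (q t) + ∫ u in t1..t, g u := by
    intro t ht
    have h := hode t1 ht1 t (hsub t ht) ht.1
    rwa [hq1] at h
  have hNq_cont : ∀ t ∈ Ici (0:ℝ), ContinuousAt (fun s => N (q s)) t := fun t ht =>
    ((hN (q t) (hq_pos t ht)).differentiableAt.continuousAt).comp (hq_cont t ht)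
  have hv_cont : ContinuousOn v (Icc t1 t2) := by
    refine ContinuousOn.congr
      (f := fun t => v t1 + N q_s - N (q t) + ∫ u in t1..t, g u) ?_ hvexpr
    exact (continuousOn_const.sub
        (fun t ht => (hNq_cont t (hsub t ht)).continuousWithinAt)).add
      (intervalIntegral.continuous_primitive hgI t1).continuousOn
  -- FTC for exp(P) * v
  have hG_cont : ContinuousOn (fun t => Real.exp (P t) * v t) (Icc t1 t2) := hμ_cont.mul hv_cont
  have hG_deriv : ∀ t ∈ Ioo t1 t2 \ ({t0} : Set ℝ),
      HasDerivAt (fun t => Real.exp (P t) * v t) (Real.exp (P t) * g t) t := by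
    rintro t ⟨ht, hne⟩
    have h1 := (hP_deriv t ht).exp
    have h2 := hv' t (hsub t ⟨ht.1.le, ht.2.le⟩) (by simpa using hne)
    have h3 := h1.mul h2
    exact h3.congr_deriv (by ring)
  have hμg_int : IntervalIntegrable (fun t => Real.exp (P t) * g t) volume t1 t2 := by
    apply (hgI t1 t2).continuousOn_mul
    rwa [uIcc_of_le ht12.le]
  have hmμ_int : IntervalIntegrable (fun t => Real.exp (P t) * n (q t)) volume t1 t2 :=
    (hμ_cont.mul (hm_contOn t1 t2 ht1)).intervalIntegrable_of_Icc ht12.le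
  have key : ∫ t in t1..t2, Real.exp (P t) * g t
      = Real.exp (P t2) * v t2 - Real.exp (P t1) * v t1 :=
    integral_eq_of_hasDerivAt_off_countable_of_le _ (fun t => Real.exp (P t) * g t)
      ht12.le (countable_singleton t0) hG_cont hG_deriv hμg_int
  have key2 : ∫ t in t1..t2, Real.exp (P t) * n (q t)
      = Real.exp (P t2) - Real.exp (P t1) := by
    refine integral_eq_of_hasDerivAt_off_countable_of_le _
      (fun t => Real.exp (P t) * n (q t)) ht12.le countable_empty
      (Real.continuous_exp.comp_continuousOn hP_cont) ?_ hmμ_int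
    rintro t ⟨ht, -⟩
    exact (hP_deriv t ht).exp
  -- comparison
  have hmono : (∫ t in t1..t2, Real.exp (P t) * g t)
      ≤ ∫ t in t1..t2, (gp / n q_s) * (Real.exp (P t) * n (q t)) := by
    refine intervalIntegral.integral_mono_on ht12.le hμg_int (hmμ_int.const_mul _) ?_
    intro t ht
    have hqt : q t ∈ Ioi (0:ℝ) := hq_pos t (hsub t ht)
    have hmt : n q_s ≤ n (q t) := by
      rcases eq_or_lt_of_le (hle t ht) with h | h
      · rw [h]
      · exact (hn_anti hqt hqs h).le
    have hexp : (0:ℝ) < Real.exp (P t) := Real.exp_pos _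
    have hh1 : Real.exp (P t) * g t ≤ Real.exp (P t) * gp :=
      mul_le_mul_of_nonneg_left (hg_le t) hexp.le
    have hh2 : Real.exp (P t) * gp ≤ gp / n q_s * (Real.exp (P t) * n (q t)) := by
      rw [div_mul_eq_mul_div, le_div_iff₀ hcpos]
      nlinarith [mul_le_mul_of_nonneg_left hmt (by positivity : (0:ℝ) ≤ Real.exp (P t) * gp)]
    exact hh1.trans hh2
  have hconst : (∫ t in t1..t2, (gp / n q_s) * (Real.exp (P t) * n (q t)))
      = (gp / n q_s) * (Real.exp (P t2) - Real.exp (P t1)) := by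
    rw [intervalIntegral.integral_const_mul, key2]
  have hd : 0 < gp / n q_s := div_pos hgp hcpos
  have hμ2pos : (0:ℝ) < Real.exp (P t2) := Real.exp_pos _
  have hbig : Real.exp (P t2) * v t2 ≤ gp / n q_s * Real.exp (P t2) := by
    rw [key, hconst] at hmono
    rw [hP1, Real.exp_zero] at hmono
    nlinarith [hmono, hd, hv1]
  have hfinal : v t2 ≤ gp / n q_s := by
    have h' : v t2 * Real.exp (P t2) ≤ gp / n q_s * Real.exp (P t2) := by
      rw [mul_comm]; exact hbig
    exact le_of_mul_le_mul_right h' hμ2pos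
  rw [hC] at hfinal
  have h'' : gp * (t2 - tb2) ≤ gp * (1 / n q_s) := by
    rw [mul_one_div]; exact hfinal
  exact le_of_mul_le_mul_left h'' hgp
end

section
/- Assume the piecewise forcing: g(t) = g_-(t) for t ≤ t0 and g(t) = g_+ for t > t0, with t0 > 0, g_+ > 0 constant and g_-(t) < 0 for all t. Let q : [0,∞) → (0,∞) be continuously differentiable, satisfy the integrated equation, and be twice differentiable with q''(t) = −n(q(t))q'(t) + g(t) for all t ≠ t0. Let t1 < t2 satisfy q(t1) = q(t2) = q_s, q'(t1) < 0, q(t) ≤ q_s on [t1, t2] and q'(t2) ≥ 0, and let t̄2 ∈ [t1, t2] be the first time t ≥ t1 with v̄(t) = 0. Then q'(t̄2) = N(q_s) − N(q(t̄2)) and 0 ≤ q'(t̄2) ≤ g_+ / n(q_s). -/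
open MeasureTheory Set Filter

/-- For the piecewise forcing `g = g_- < 0` on `(-∞,t0]`, `g = g_+ > 0` on `(t0,∞)`,
a solution `q` of the model ODE with `q(t1) = q(t2) = q_s`, `q'(t1) < 0`,
`q ≤ q_s` on `[t1,t2]`, `q'(t2) ≥ 0`, and `t̄2` the first zero of
`v̄(t) = q'(t1) + ∫_{t1}^t g`, satisfies
`q'(t̄2) = N(q_s) - N(q(t̄2))` and `0 ≤ q'(t̄2) ≤ g_+ / n(q_s)`. -/
theorem stmt_4 (n N g gm q v : ℝ → ℝ) (gp t0 q_s t1 t2 tb2 : ℝ)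
    (hn_diff : ∀ x ∈ Ioi (0:ℝ), DifferentiableAt ℝ n x)
    (hn_pos : ∀ x ∈ Ioi (0:ℝ), 0 < n x)
    (hn_anti : StrictAntiOn n (Ioi 0))
    (hN : ∀ x ∈ Ioi (0:ℝ), HasDerivAt N (n x) x)
    (ht0 : 0 < t0) (hgp : 0 < gp)
    (hgm : ∀ t, gm t < 0)
    (hg_def : ∀ t, g t = if t ≤ t0 then gm t else gp)
    (hg_loc : LocallyIntegrable g)
    (hq_pos : ∀ t ∈ Ici (0:ℝ), 0 < q t)
    (hqv : ∀ t ∈ Ici (0:ℝ), HasDerivAt q (v t) t)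
    (hode : ∀ s ∈ Ici (0:ℝ), ∀ t ∈ Ici (0:ℝ), s ≤ t →
      v t = v s + N (q s) - N (q t) + ∫ u in s..t, g u)
    (hv' : ∀ t ∈ Ici (0:ℝ), t ≠ t0 → HasDerivAt v (-n (q t) * v t + g t) t)
    (hqs : 0 < q_s)
    (ht1 : 0 ≤ t1) (ht12 : t1 < t2)
    (hq1 : q t1 = q_s) (hq2 : q t2 = q_s)
    (hv1 : v t1 < 0) (hv2 : 0 ≤ v t2)
    (hle : ∀ t ∈ Icc t1 t2, q t ≤ q_s)
    (htb2_mem : tb2 ∈ Icc t1 t2)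
    (htb2 : IsLeast {t : ℝ | t1 ≤ t ∧ v t1 + (∫ s in t1..t, g s) = 0} tb2) :
    v tb2 = N q_s - N (q tb2) ∧ 0 ≤ v tb2 ∧ v tb2 ≤ gp / n q_s := by
  have hnqs : 0 < n q_s := hn_pos q_s hqs
  set C : ℝ := gp / n q_s with hC
  have hCpos : 0 < C := div_pos hgp hnqs
  have ht1b2 : t1 ≤ tb2 := htb2_mem.1
  have htb2t2 : tb2 ≤ t2 := htb2_mem.2
  have htb2_nonneg : (0:ℝ) ≤ tb2 := ht1.trans ht1b2
  have heq0 : v t1 + (∫ s in t1..tb2, g s) = 0 := htb2.1.2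
  -- interval integrability of g
  have hInt : ∀ a b : ℝ, IntervalIntegrable g volume a b := fun a b =>
    intervalIntegrable_iff.mpr
      ((hg_loc.integrableOn_isCompact isCompact_uIcc).mono_set uIoc_subset_uIcc)
  -- first claim
  have h1 : v tb2 = N q_s - N (q tb2) := by
    have h := hode t1 ht1 tb2 htb2_nonneg ht1b2
    rw [hq1] at h
    linarith
  -- monotonicity of N
  have hNc : ContinuousOn N (Ioi 0) := fun x hx => (hN x hx).continuousAt.continuousWithinAt
  have hNmono : StrictMonoOn N (Ioi 0) := by
    apply strictMonoOn_of_deriv_pos (convex_Ioi 0) hNc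
    intro x hx
    rw [interior_Ioi] at hx
    rw [(hN x hx).deriv]
    exact hn_pos x hx
  have hqtb2_pos : 0 < q tb2 := hq_pos tb2 htb2_nonneg
  have hqtb2_le : q tb2 ≤ q_s := hle tb2 htb2_mem
  have h2 : 0 ≤ v tb2 := by
    rw [h1]
    have := hNmono.monotoneOn (mem_Ioi.mpr hqtb2_pos) (mem_Ioi.mpr hqs) hqtb2_le
    linarith
  refine ⟨h1, h2, ?_⟩
  -- upper bound by contradiction
  by_contra hcon
  push_neg at hcon
  -- continuity of v on Ici t1
  have hG : Continuous fun t => ∫ u in t1..t, g u :=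
    intervalIntegral.continuous_primitive hInt t1
  have hvc : ContinuousOn v (Ici t1) := by
    have hform : ∀ t ∈ Ici t1, v t = v t1 + N (q t1) - N (q t) + ∫ u in t1..t, g u :=
      fun t ht => hode t1 ht1 t (ht1.trans ht) ht
    have hcont : ContinuousOn (fun t => v t1 + N (q t1) - N (q t) + ∫ u in t1..t, g u)
        (Ici t1) := by
      apply ContinuousOn.add _ hG.continuousOn
      apply ContinuousOn.sub continuousOn_const
      intro t ht
      have ht0' : (0:ℝ) ≤ t := ht1.trans ht
      exact ((hN (q t) (hq_pos t ht0')).continuousAt.comp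
        (hqv t ht0').continuousAt).continuousWithinAt
    exact hcont.congr hform
  -- t0 < tb2
  have ht0b : t0 < tb2 := by
    by_contra h'
    push_neg at h'
    have h2' : 0 ≤ ∫ u in t1..tb2, -g u := by
      apply intervalIntegral.integral_nonneg ht1b2
      intro u hu
      rw [hg_def u, if_pos (hu.2.trans h')]
      linarith [hgm u]
    rw [intervalIntegral.integral_neg] at h2'
    linarith
  -- the barrier set
  set S : Set ℝ := Icc t1 tb2 ∩ v ⁻¹' (Iic C) with hS
  have hSne : S.Nonempty :=
    ⟨t1, ⟨le_refl t1, ht1b2⟩, show v t1 ≤ C from le_of_lt (hv1.trans hCpos)⟩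
  have hSbdd' : BddAbove S := ⟨tb2, fun x hx => hx.1.2⟩
  have hSclosed : IsClosed S :=
    (hvc.mono Icc_subset_Ici_self).preimage_isClosed_of_isClosed isClosed_Icc isClosed_Iic
  set s := sSup S with hs_def
  have hsS : s ∈ S := hSclosed.csSup_mem hSne hSbdd'
  have hst1 : t1 ≤ s := hsS.1.1
  have hstb2 : s ≤ tb2 := hsS.1.2
  have hvsC : v s ≤ C := hsS.2
  have hs_lt : s < tb2 := lt_of_le_of_ne hstb2 (by
    intro h
    rw [h] at hvsC
    linarith)
  have hkey : ∀ t, s < t → t ≤ tb2 → C < v t := by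
    intro t hst htt
    by_contra h'
    push_neg at h'
    have : t ∈ S := ⟨⟨hst1.trans hst.le, htt⟩, h'⟩
    exact absurd (le_csSup hSbdd' this) (not_le.mpr hst)
  -- derivative of v is negative where v > C, between s and tb2
  have hderiv : ∀ x, s < x → x ≤ tb2 → x ≠ t0 → deriv v x < 0 := by
    intro x hsx hxb hxne
    have hx0 : (0:ℝ) ≤ x := ht1.trans (hst1.trans hsx.le)
    have hxt2 : x ≤ t2 := hxb.trans htb2t2
    have hqx_pos : 0 < q x := hq_pos x hx0
    have hqx_le : q x ≤ q_s := hle x ⟨hst1.trans hsx.le, hxt2⟩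
    have hnqx : n q_s ≤ n (q x) :=
      hn_anti.antitoneOn (mem_Ioi.mpr hqx_pos) (mem_Ioi.mpr hqs) hqx_le
    have hvx : C < v x := hkey x hsx hxb
    have hgx : g x ≤ gp := by
      rw [hg_def x]
      split
      · linarith [hgm x]
      · exact le_refl gp
    rw [(hv' x hx0 hxne).deriv]
    have h3 : n q_s * v x ≤ n (q x) * v x :=
      mul_le_mul_of_nonneg_right hnqx (by linarith)
    have h4 : n q_s * C < n q_s * v x := by
      exact mul_lt_mul_of_pos_left hvx hnqs
    have h5 : n q_s * C = gp := by
      rw [hC]; field_simp [hnqs.ne']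
    linarith
  by_cases hst0 : t0 ≤ s
  · -- no exceptional point in (s, tb2)
    have hanti : StrictAntiOn v (Icc s tb2) := by
      apply strictAntiOn_of_deriv_neg (convex_Icc s tb2)
        (hvc.mono (fun x hx => hst1.trans hx.1))
      intro x hx
      rw [interior_Icc] at hx
      exact hderiv x hx.1 hx.2.le (fun h => by rw [h] at hx; exact absurd hst0 (not_le.mpr hx.1))
    have := hanti ⟨le_refl s, hstb2⟩ ⟨hstb2, le_refl tb2⟩ hs_lt
    linarith
  · -- s < t0, use interval [s, t0]
    push_neg at hst0
    have hanti : StrictAntiOn v (Icc s t0) := by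
      apply strictAntiOn_of_deriv_neg (convex_Icc s t0)
        (hvc.mono (fun x hx => hst1.trans hx.1))
      intro x hx
      rw [interior_Icc] at hx
      exact hderiv x hx.1 (hx.2.le.trans ht0b.le) (ne_of_lt hx.2)
    have hvt0 := hanti ⟨le_refl s, hst0.le⟩ ⟨hst0.le, le_refl t0⟩ hst0
    have := hkey t0 hst0 ht0b.le
    linarith
end

section
/- Assume the piecewise forcing: g(t) = g_-(t) for t ≤ t0 and g(t) = g_+ for t > t0, with t0 > 0, g_+ > 0 constant and g_-(t) < 0 for all t. Let q be a solution of the model ODE on [0,∞) (integrated sense, and satisfying the ODE pointwise for t ≠ t0), let t1 < t2 satisfy q(t1) = q(t2) = q_s, q'(t1) < 0, q(t) ≤ q_s on [t1, t2], q'(t2) ≥ 0, and let t̄2 ∈ [max(t0,t1), t2] be the first time t ≥ t1 with v̄(t) = 0; set τ := t2 − t̄2. Let q̄ : [t̄2, ∞) → (0,∞) be a solution of the model ODE with the same forcing g, q̄(t̄2) = q_s and q̄'(t̄2) = 0. Then: (i) for all t ∈ [t̄2, t2), |q(t) − q̄(t)| ≤ q̄(t); (ii) for all t ≥ t2, q̄(t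 − τ) ≤ q(t) ≤ q̄(t), and consequently |q(t) − q̄(t)| ≤ q̄(t) − q̄(t − τ). -/
open MeasureTheory Set Filter

/-- If `f a ≤ 0` and `f' < 0` wherever `f > 0` on `(a,b]`, then `f b ≤ 0`. -/
lemma aux_nonpos (f f' : ℝ → ℝ) (a b : ℝ) (hab : a ≤ b)
    (hd : ∀ t ∈ Set.Icc a b, HasDerivAt f (f' t) t)
    (ha : f a ≤ 0)
    (hneg : ∀ t ∈ Set.Ioc a b, 0 < f t → f' t < 0) :
    f b ≤ 0 := by
  by_contra hb
  push_neg at hb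
  set S : Set ℝ := {t | t ∈ Set.Icc a b ∧ f t ≤ 0} with hSdef
  have haS : a ∈ S := ⟨⟨le_refl a, hab⟩, ha⟩
  have hne : S.Nonempty := ⟨a, haS⟩
  have hbdd : BddAbove S := ⟨b, fun x hx => hx.1.2⟩
  set s := sSup S with hs
  have hsa : a ≤ s := le_csSup hbdd haS
  have hsb : s ≤ b := csSup_le hne fun x hx => hx.1.2
  have hfs : f s ≤ 0 := by
    by_contra hfs
    push_neg at hfs
    have hcont : ContinuousAt f s := (hd s ⟨hsa, hsb⟩).continuousAt
    have hev : f ⁻¹' Set.Ioi 0 ∈ nhds s := hcont (isOpen_Ioi.mem_nhds hfs)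
    rcases Metric.mem_nhds_iff.mp hev with ⟨ε, hε, hball⟩
    have hle : ∀ x ∈ S, x ≤ s - ε / 2 := by
      intro x hx
      by_contra hx'
      push_neg at hx'
      have hxs : x ≤ s := le_csSup hbdd hx
      have : x ∈ Metric.ball s ε := by
        rw [Metric.mem_ball, Real.dist_eq, abs_sub_lt_iff]
        constructor <;> linarith
      have := hball this
      simp only [Set.mem_preimage, Set.mem_Ioi] at this
      linarith [hx.2]
    have := csSup_le hne hle
    linarith
  have hsb' : s < b := lt_of_le_of_ne hsb (fun h => by rw [h] at hfs; linarith)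
  have hpos : ∀ t ∈ Set.Ioc s b, 0 < f t := by
    intro t ht
    by_contra hft
    push_neg at hft
    have htS : t ∈ S := ⟨⟨le_trans hsa ht.1.le, ht.2⟩, hft⟩
    exact absurd (le_csSup hbdd htS) (not_le.mpr ht.1)
  have hanti : StrictAntiOn f (Set.Icc s b) := by
    apply strictAntiOn_of_deriv_neg (convex_Icc s b)
    · exact fun t ht => (hd t ⟨le_trans hsa ht.1, ht.2⟩).continuousAt.continuousWithinAt
    · intro t ht
      rw [interior_Icc] at ht
      rw [(hd t ⟨le_trans hsa ht.1.le, ht.2.le⟩).deriv]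
      exact hneg t ⟨lt_of_le_of_lt hsa ht.1, ht.2.le⟩ (hpos t ⟨ht.1, ht.2.le⟩)
  have := hanti ⟨le_refl s, hsb⟩ ⟨hsb, le_refl b⟩ hsb'
  linarith

/-- Error estimate between the true trajectory `q` and the approximated
trajectory `q̄` restarted at time `t̄2` from the threshold `q_s` with zero
velocity, for the piecewise forcing `g = g_- < 0` on `(-∞,t0]`, `g = g_+ > 0`
on `(t0,∞)`: with `τ = t2 - t̄2`,
(i) `|q(t) - q̄(t)| ≤ q̄(t)` for `t ∈ [t̄2, t2)`;
(ii) `q̄(t-τ) ≤ q(t) ≤ q̄(t)` for `t ≥ t2`, hence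
`|q(t) - q̄(t)| ≤ q̄(t) - q̄(t-τ)`. -/
theorem stmt_6 (n N g gm q v qb vb : ℝ → ℝ) (gp t0 q_s t1 t2 tb2 : ℝ)
    (hn_diff : ∀ x ∈ Ioi (0:ℝ), DifferentiableAt ℝ n x)
    (hn_pos : ∀ x ∈ Ioi (0:ℝ), 0 < n x)
    (hn_anti : StrictAntiOn n (Ioi 0))
    (hN : ∀ x ∈ Ioi (0:ℝ), HasDerivAt N (n x) x)
    (ht0 : 0 < t0) (hgp : 0 < gp)
    (hgm : ∀ t, gm t < 0)
    (hg_def : ∀ t, g t = if t ≤ t0 then gm t else gp)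
    (hg_loc : LocallyIntegrable g)
    (hq_pos : ∀ t ∈ Ici (0:ℝ), 0 < q t)
    (hqv : ∀ t ∈ Ici (0:ℝ), HasDerivAt q (v t) t)
    (hode : ∀ s ∈ Ici (0:ℝ), ∀ t ∈ Ici (0:ℝ), s ≤ t →
      v t = v s + N (q s) - N (q t) + ∫ u in s..t, g u)
    (hv' : ∀ t ∈ Ici (0:ℝ), t ≠ t0 → HasDerivAt v (-n (q t) * v t + g t) t)
    (hqs : 0 < q_s)
    (ht1 : 0 ≤ t1) (ht12 : t1 < t2)
    (hq1 : q t1 = q_s) (hq2 : q t2 = q_s)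
    (hv1 : v t1 < 0) (hv2 : 0 ≤ v t2)
    (hle : ∀ t ∈ Icc t1 t2, q t ≤ q_s)
    (htb2_mem : tb2 ∈ Icc (max t0 t1) t2)
    (htb2 : IsLeast {t : ℝ | t1 ≤ t ∧ v t1 + (∫ s in t1..t, g s) = 0} tb2)
    (hqb_pos : ∀ t ∈ Ici tb2, 0 < qb t)
    (hqbv : ∀ t ∈ Ici tb2, HasDerivAt qb (vb t) t)
    (hqbode : ∀ s ∈ Ici tb2, ∀ t ∈ Ici tb2, s ≤ t →
      vb t = vb s + N (qb s) - N (qb t) + ∫ u in s..t, g u)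
    (hqb0 : qb tb2 = q_s) (hvb0 : vb tb2 = 0) :
    (∀ t, tb2 ≤ t → t < t2 → |q t - qb t| ≤ qb t) ∧
    (∀ t, t2 ≤ t → qb (t - (t2 - tb2)) ≤ q t ∧ q t ≤ qb t ∧
      |q t - qb t| ≤ qb t - qb (t - (t2 - tb2))) := by
  have ht0b2 : t0 ≤ tb2 := le_trans (le_max_left t0 t1) htb2_mem.1
  have ht1b2 : t1 ≤ tb2 := le_trans (le_max_right t0 t1) htb2_mem.1
  have htb22 : tb2 ≤ t2 := htb2_mem.2
  have htb2_0 : (0:ℝ) ≤ tb2 := le_trans ht1 ht1b2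
  have ht2_0 : (0:ℝ) ≤ t2 := le_trans htb2_0 htb22
  -- integral of g on [a,b] with t0 ≤ a is gp * (b - a)
  have hint : ∀ a b : ℝ, t0 ≤ a → a ≤ b → (∫ u in a..b, g u) = gp * (b - a) := by
    intro a b h0a hab
    have : (∫ u in a..b, g u) = ∫ _u in a..b, gp := by
      apply intervalIntegral.integral_congr_ae
      filter_upwards with x
      intro hx'
      rw [Set.uIoc_of_le hab] at hx'
      rw [hg_def, if_neg (not_le.mpr (lt_of_le_of_lt h0a hx'.1))]
    rw [this, intervalIntegral.integral_const, smul_eq_mul]; ring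
  have hgi : ∀ a b : ℝ, IntervalIntegrable g volume a b := by
    intro a b
    rw [intervalIntegrable_iff]
    exact (hg_loc.integrableOn_isCompact isCompact_uIcc).mono_set Set.Ioc_subset_Icc_self
  -- N is strictly monotone on (0, ∞)
  have hNmono : StrictMonoOn N (Set.Ioi 0) := by
    apply strictMonoOn_of_deriv_pos (convex_Ioi 0)
    · exact fun x hx => (hN x hx).continuousAt.continuousWithinAt
    · intro x hx
      rw [interior_Ioi] at hx
      rw [(hN x hx).deriv]
      exact hn_pos x hx
  -- formula for vb
  have hvb : ∀ t, tb2 ≤ t → vb t = N q_s + gp * (t - tb2) - N (qb t) := by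
    intro t ht
    have h := hqbode tb2 (le_refl tb2) t ht ht
    rw [hvb0, hqb0, hint tb2 t ht0b2 ht] at h
    linarith
  -- v t2 = gp * (t2 - tb2)
  have hv2' : v t2 = gp * (t2 - tb2) := by
    have h := hode t1 ht1 t2 ht2_0 ht12.le
    rw [hq1, hq2] at h
    have hsplit := intervalIntegral.integral_add_adjacent_intervals
      (hgi t1 tb2) (hgi tb2 t2)
    have h0 := htb2.1.2
    rw [← hsplit, hint tb2 t2 ht0b2 htb22] at h
    linarith
  -- formula for v on [t2, ∞)
  have hv : ∀ t, t2 ≤ t → v t = N q_s + gp * (t - tb2) - N (q t) := by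
    intro t ht
    have h := hode t2 ht2_0 t (le_trans ht2_0 ht) ht
    rw [hq2, hint t2 t (le_trans ht0b2 htb22) ht, hv2'] at h
    linarith
  -- claim A : qb t ≥ q_s for t ≥ tb2
  have hqbge : ∀ t, tb2 ≤ t → q_s ≤ qb t := by
    intro b hb
    have key := aux_nonpos (fun t => q_s - qb t) (fun t => -vb t) tb2 b hb
      (fun t ht => (hqbv t ht.1).const_sub q_s)
      (by show q_s - qb tb2 ≤ 0; rw [hqb0]; linarith)
      ?_
    · change q_s - qb b ≤ 0 at key; linarith
    intro t ht hpos
    have h1 : 0 < qb t := hqb_pos t ht.1.le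
    have h2 : N (qb t) < N q_s := hNmono h1 hqs (by linarith)
    have h3 := hvb t ht.1.le
    have h4 : 0 < gp * (t - tb2) := mul_pos hgp (by linarith [ht.1])
    linarith
  constructor
  · -- part (i)
    intro t h1 h2
    have hq_le : q t ≤ q_s := hle t ⟨le_trans ht1b2 h1, h2.le⟩
    have hqpos : 0 < q t := hq_pos t (le_trans htb2_0 h1)
    have hqb' : q_s ≤ qb t := hqbge t h1
    rw [abs_le]
    constructor <;> linarith
  · -- part (ii)
    intro t ht
    have htb2t : tb2 ≤ t := le_trans htb22 ht
    have hub : q t ≤ qb t := by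
      have key := aux_nonpos (fun s => q s - qb s) (fun s => v s - vb s) t2 t ht
        (fun s hs => (hqv s (le_trans ht2_0 hs.1)).sub
          (hqbv s (le_trans htb22 hs.1)))
        (by show q t2 - qb t2 ≤ 0; rw [hq2]; linarith [hqbge t2 htb22])
        ?_
      · change q t - qb t ≤ 0 at key; linarith
      intro s hs hpos
      have hqsp : 0 < q s := hq_pos s (le_trans ht2_0 hs.1.le)
      have hqbsp : 0 < qb s := hqb_pos s (le_trans htb22 hs.1.le)
      have hNN : N (qb s) < N (q s) := hNmono hqbsp hqsp (by linarith)
      have h1 := hv s hs.1.le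
      have h2 := hvb s (le_trans htb22 hs.1.le)
      linarith
    have hlb : qb (t - (t2 - tb2)) ≤ q t := by
      have key := aux_nonpos (fun s => qb (s - (t2 - tb2)) - q s)
        (fun s => vb (s - (t2 - tb2)) - v s) t2 t ht
        ?_
        (by show qb (t2 - (t2 - tb2)) - q t2 ≤ 0
            rw [show t2 - (t2 - tb2) = tb2 by ring, hqb0, hq2]; simp)
        ?_
      · change qb (t - (t2 - tb2)) - q t ≤ 0 at key; linarith
      · intro s hs
        have hmem : tb2 ≤ s - (t2 - tb2) := by linarith [hs.1]
        have hcomp : HasDerivAt (fun s => qb (s - (t2 - tb2)))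
            (vb (s - (t2 - tb2)) * 1) s :=
          (hqbv (s - (t2 - tb2)) hmem).comp s ((hasDerivAt_id s).sub_const (t2 - tb2))
        rw [mul_one] at hcomp
        exact hcomp.sub (hqv s (le_trans ht2_0 hs.1))
      · intro s hs hpos
        have hmem : tb2 ≤ s - (t2 - tb2) := by linarith [hs.1.le]
        have hqsp : 0 < q s := hq_pos s (le_trans ht2_0 hs.1.le)
        have hqbsp : 0 < qb (s - (t2 - tb2)) := hqb_pos _ hmem
        have hNN : N (q s) < N (qb (s - (t2 - tb2))) := hNmono hqsp hqbsp (by linarith)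
        have h1 := hv s hs.1.le
        have h2 := hvb (s - (t2 - tb2)) hmem
        have h3 : 0 ≤ gp * (t2 - tb2) := mul_nonneg hgp.le (by linarith)
        linarith
    refine ⟨hlb, hub, ?_⟩
    rw [abs_le]
    constructor <;> linarith
end

section
/- Let q be a solution of the model ODE on [t1, t2] (in the integrated sense), with q(t1) = q(t2) = q_s and q(t) ≤ q_s for all t ∈ [t1, t2]. Let t̄2 ∈ [t1, t2] be a time with v̄(t̄2) = 0, where v̄(t) = q'(t1) + ∫_{t1}^t g(s) ds. Then for every T ∈ (t̄2, t2), ∫_{t̄2}^{T} (T − s) g(s) ds < q_s. Consequently, the first time t̃2 > t̄2 satisfying ∫_{t̄2}^{t̃2} (t̃2 − s) g(s) ds = q_s is an upper bound for t2: t̃2 ≥ t2. -/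
open MeasureTheory Set Filter
open scoped Interval

private lemma aux_kernel_int (g : ℝ → ℝ)
    (hg : ∀ a b, IntervalIntegrable g volume a b) (c x y : ℝ) :
    IntervalIntegrable (fun s => (c - s) * g s) volume x y :=
  (hg x y).continuousOn_mul ((continuous_const.sub continuous_id).continuousOn)

private lemma aux_hasDerivAt (g : ℝ → ℝ)
    (hg : ∀ a b, IntervalIntegrable g volume a b) (a t : ℝ) :
    HasDerivAt (fun x => ∫ s in a..x, (x - s) * g s) (∫ s in a..t, g s) t := by
  rw [hasDerivAt_iff_isLittleO]
  have hker := aux_kernel_int g hg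
  have hdecomp : ∀ y : ℝ,
      (∫ s in a..y, (y - s) * g s) - (∫ s in a..t, (t - s) * g s)
        - (y - t) * (∫ s in a..t, g s)
      = (y - t) * ((∫ s in a..y, g s) - ∫ s in a..t, g s)
        + ∫ s in t..y, (t - s) * g s := by
    intro y
    have e1 : (∫ s in a..y, (y - s) * g s)
        = (∫ s in a..y, (t - s) * g s) + (y - t) * ∫ s in a..y, g s := by
      rw [← intervalIntegral.integral_const_mul,
        ← intervalIntegral.integral_add (hker t a y) ((hg a y).const_mul _)]
      apply intervalIntegral.integral_congr
      intro s _
      ring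
    have e2 : (∫ s in a..y, (t - s) * g s)
        = (∫ s in a..t, (t - s) * g s) + ∫ s in t..y, (t - s) * g s :=
      (intervalIntegral.integral_add_adjacent_intervals (hker t a t) (hker t t y)).symm
    rw [e1, e2]; ring
  have hGc : Continuous fun x => ∫ s in a..x, g s :=
    intervalIntegral.continuous_primitive hg a
  have hA : (fun y => (y - t) * ((∫ s in a..y, g s) - ∫ s in a..t, g s))
      =o[nhds t] fun y => y - t := by
    have h0 : Tendsto (fun y => (∫ s in a..y, g s) - ∫ s in a..t, g s)
        (nhds t) (nhds 0) := by
      simpa using (hGc.tendsto t).sub_const (∫ s in a..t, g s)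
    have := (Asymptotics.isBigO_refl (fun y => y - t) (nhds t)).mul_isLittleO
      ((Asymptotics.isLittleO_one_iff ℝ).2 h0)
    simpa using this
  have hB : (fun y => ∫ s in t..y, (t - s) * g s) =o[nhds t] fun y => y - t := by
    have hψc : Continuous fun y => ∫ s in t..y, |g s| :=
      intervalIntegral.continuous_primitive (fun x y => (hg x y).abs) t
    have hbound : ∀ y, ‖∫ s in t..y, (t - s) * g s‖
        ≤ ‖(y - t) * ∫ s in t..y, |g s|‖ := by
      intro y
      have h1 : ‖∫ s in t..y, (t - s) * g s‖ ≤ ∫ s in Ι t y, ‖(t - s) * g s‖ :=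
        intervalIntegral.norm_integral_le_integral_norm_uIoc
      have h2 : ∫ s in Ι t y, ‖(t - s) * g s‖ ≤ ∫ s in Ι t y, |y - t| * ‖g s‖ := by
        apply setIntegral_mono_on
        · exact (intervalIntegrable_iff.1 (hker t t y)).norm
        · exact (intervalIntegrable_iff.1 (hg t y)).norm.const_mul _
        · exact measurableSet_uIoc
        · intro s hs
          rw [norm_mul]
          apply mul_le_mul_of_nonneg_right _ (norm_nonneg _)
          rcases le_total t y with h | h
          · rw [uIoc_of_le h] at hs
            rw [Real.norm_eq_abs, abs_of_nonpos (by linarith [hs.1.le] : t - s ≤ 0),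
              abs_of_nonneg (by linarith : (0:ℝ) ≤ y - t)]
            linarith [hs.2]
          · rw [uIoc_of_ge h] at hs
            rw [Real.norm_eq_abs, abs_of_nonneg (by linarith [hs.2] : (0:ℝ) ≤ t - s),
              abs_of_nonpos (by linarith : y - t ≤ 0)]
            linarith [hs.1.le]
      have h3 : ∫ s in Ι t y, |y - t| * ‖g s‖
          = |y - t| * ∫ s in Ι t y, ‖g s‖ := integral_const_mul _ _
      have h4 : ∫ s in Ι t y, ‖g s‖ ≤ abs (∫ s in t..y, |g s|) := by
        rcases le_total t y with h | h
        · rw [uIoc_of_le h]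
          have : (∫ s in t..y, |g s|) = ∫ s in Set.Ioc t y, |g s| :=
            intervalIntegral.integral_of_le h
          simp only [Real.norm_eq_abs]
          rw [← this]
          exact le_abs_self _
        · rw [uIoc_of_ge h]
          have : (∫ s in t..y, |g s|) = -∫ s in Set.Ioc y t, |g s| :=
            intervalIntegral.integral_of_ge h
          simp only [Real.norm_eq_abs]
          rw [show (∫ s in Set.Ioc y t, |g s|) = -∫ s in t..y, |g s| by rw [this]; ring]
          exact neg_le_abs _
      calc ‖∫ s in t..y, (t - s) * g s‖
          ≤ |y - t| * ∫ s in Ι t y, ‖g s‖ := h1.trans (h2.trans_eq h3)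
        _ ≤ |y - t| * abs (∫ s in t..y, |g s|) := by
            apply mul_le_mul_of_nonneg_left h4 (abs_nonneg _)
        _ = ‖(y - t) * ∫ s in t..y, |g s|‖ := by
            rw [Real.norm_eq_abs, abs_mul]
    have h1 : (fun y => ∫ s in t..y, (t - s) * g s)
        =O[nhds t] fun y => (y - t) * ∫ s in t..y, |g s| :=
      Asymptotics.isBigO_of_le _ hbound
    have h2 : (fun y => (y - t) * ∫ s in t..y, |g s|) =o[nhds t] fun y => y - t := by
      have h0 : Tendsto (fun y => ∫ s in t..y, |g s|) (nhds t) (nhds 0) := by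
        have := hψc.tendsto t
        simpa using this
      have := (Asymptotics.isBigO_refl (fun y => y - t) (nhds t)).mul_isLittleO
        ((Asymptotics.isLittleO_one_iff ℝ).2 h0)
      simpa using this
    exact h1.trans_isLittleO h2
  have hsum := hA.add hB
  simp only [smul_eq_mul]
  exact (Asymptotics.isLittleO_congr (Eventually.of_forall hdecomp)
    (Eventually.of_forall fun _ => rfl)).2 hsum

/-- Upper bound for the return time: if `q` solves the model ODE (integrated
form) on `[t1,t2]` with `q(t1) = q(t2) = q_s`, `q ≤ q_s` on `[t1,t2]`, and
`t̄2 ∈ [t1,t2]` satisfies `v̄(t̄2) = 0` where `v̄(t) = q'(t1) + ∫_{t1}^t g`,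
then `∫_{t̄2}^T (T-s) g(s) ds < q_s` for all `T ∈ (t̄2, t2)`; consequently the
first time `t̃2 > t̄2` with `∫_{t̄2}^{t̃2} (t̃2-s) g(s) ds = q_s` satisfies
`t̃2 ≥ t2`. -/
theorem stmt_7 (n N g q v : ℝ → ℝ) (q_s t1 t2 tb2 : ℝ)
    (hn_pos : ∀ x ∈ Ioi (0:ℝ), 0 < n x)
    (hn_anti : StrictAntiOn n (Ioi 0))
    (hN : ∀ x ∈ Ioi (0:ℝ), HasDerivAt N (n x) x)
    (hg : LocallyIntegrable g)
    (ht12 : t1 ≤ t2)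
    (hq_pos : ∀ t ∈ Icc t1 t2, 0 < q t)
    (hqv : ∀ t ∈ Icc t1 t2, HasDerivAt q (v t) t)
    (hode : ∀ s ∈ Icc t1 t2, ∀ t ∈ Icc t1 t2, s ≤ t →
      v t = v s + N (q s) - N (q t) + ∫ u in s..t, g u)
    (hq1 : q t1 = q_s) (hq2 : q t2 = q_s)
    (hle : ∀ t ∈ Icc t1 t2, q t ≤ q_s)
    (htb2_mem : tb2 ∈ Icc t1 t2)
    (hvbar : v t1 + (∫ s in t1..tb2, g s) = 0) :
    (∀ T, tb2 < T → T < t2 → (∫ s in tb2..T, (T - s) * g s) < q_s) ∧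
    (∀ tt2 : ℝ,
      IsLeast {t : ℝ | tb2 < t ∧ (∫ s in tb2..t, (t - s) * g s) = q_s} tt2 →
      t2 ≤ tt2) := by
  have hgi : ∀ a b, IntervalIntegrable g volume a b := fun a b =>
    (hg.integrableOn_isCompact isCompact_uIcc).intervalIntegrable
  obtain ⟨htb2l, htb2r⟩ := htb2_mem
  have ht1mem : t1 ∈ Icc t1 t2 := ⟨le_rfl, ht12⟩
  -- N is monotone on Ioi 0
  have hNmono : StrictMonoOn N (Ioi 0) := by
    apply strictMonoOn_of_deriv_pos (convex_Ioi 0)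
    · exact fun x hx => (hN x hx).continuousAt.continuousWithinAt
    · intro x hx
      rw [interior_Ioi] at hx
      rw [(hN x hx).deriv]
      exact hn_pos x hx
  have hNle : ∀ t ∈ Icc t1 t2, N (q t) ≤ N (q t1) := by
    intro t ht
    apply hNmono.monotoneOn (hq_pos t ht) (hq_pos t1 ht1mem)
    rw [hq1]
    exact hle t ht
  -- formula for v
  have hvformula : ∀ t ∈ Icc t1 t2,
      v t = (N (q t1) - N (q t)) + ∫ s in tb2..t, g s := by
    intro t ht
    have h := hode t1 ht1mem t ht ht.1
    have hsplit : (∫ u in t1..t, g u)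
        = (∫ u in t1..tb2, g u) + ∫ u in tb2..t, g u :=
      (intervalIntegral.integral_add_adjacent_intervals (hgi t1 tb2) (hgi tb2 t)).symm
    rw [h, hsplit]
    linarith [hvbar]
  have hvge : ∀ t ∈ Icc t1 t2, (∫ s in tb2..t, g s) ≤ v t := by
    intro t ht
    rw [hvformula t ht]
    linarith [hNle t ht]
  -- continuity of v
  have hqcont : ContinuousOn q (Icc t1 t2) :=
    fun t ht => (hqv t ht).continuousAt.continuousWithinAt
  have hNcont : ContinuousOn N (Ioi 0) :=
    fun x hx => (hN x hx).continuousAt.continuousWithinAt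
  have hvcont : ContinuousOn v (Icc t1 t2) := by
    have h1 : ContinuousOn
        (fun t => (N (q t1) - N (q t)) + ∫ s in tb2..t, g s) (Icc t1 t2) := by
      apply ContinuousOn.add
      · exact continuousOn_const.sub (hNcont.comp hqcont fun t ht => hq_pos t ht)
      · exact (intervalIntegral.continuous_primitive hgi tb2).continuousOn
    exact h1.congr hvformula
  have hGcont : Continuous fun t => ∫ s in tb2..t, g s :=
    intervalIntegral.continuous_primitive hgi tb2
  have key : ∀ T, tb2 < T → T < t2 → (∫ s in tb2..T, (T - s) * g s) < q_s := by
    intro T hT1 hT2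
    have hTmem : T ∈ Icc t1 t2 := ⟨le_trans htb2l hT1.le, hT2.le⟩
    have hsub : Icc tb2 T ⊆ Icc t1 t2 := Icc_subset_Icc htb2l hT2.le
    have huIcc : uIcc tb2 T = Icc tb2 T := uIcc_of_le hT1.le
    have hv_int : IntervalIntegrable v volume tb2 T := by
      apply ContinuousOn.intervalIntegrable
      rw [huIcc]
      exact hvcont.mono hsub
    -- FTC for q
    have hq_ftc : (∫ t in tb2..T, v t) = q T - q tb2 := by
      apply intervalIntegral.integral_eq_sub_of_hasDerivAt
      · intro x hx
        rw [huIcc] at hx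
        exact hqv x (hsub hx)
      · exact hv_int
    -- FTC for the kernel integral
    have hW_ftc : (∫ t in tb2..T, ∫ s in tb2..t, g s)
        = (∫ s in tb2..T, (T - s) * g s)
          - ∫ s in tb2..tb2, (tb2 - s) * g s := by
      apply intervalIntegral.integral_eq_sub_of_hasDerivAt
      · exact fun x _ => aux_hasDerivAt g hgi tb2 x
      · exact hGcont.intervalIntegrable tb2 T
    rw [intervalIntegral.integral_same, sub_zero] at hW_ftc
    have hmono : (∫ t in tb2..T, ∫ s in tb2..t, g s) ≤ ∫ t in tb2..T, v t := by
      apply intervalIntegral.integral_mono_on hT1.le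
        (hGcont.intervalIntegrable tb2 T) hv_int
      intro x hx
      exact hvge x (hsub hx)
    have h5 : q T ≤ q_s := hle T hTmem
    have h6 : 0 < q tb2 := hq_pos tb2 ⟨htb2l, htb2r⟩
    calc (∫ s in tb2..T, (T - s) * g s)
        = ∫ t in tb2..T, ∫ s in tb2..t, g s := hW_ftc.symm
      _ ≤ ∫ t in tb2..T, v t := hmono
      _ = q T - q tb2 := hq_ftc
      _ < q_s := by linarith
  refine ⟨key, ?_⟩
  rintro tt2 ⟨⟨hlt, heq⟩, -⟩
  by_contra h
  push_neg at h
  exact absurd heq (ne_of_lt (key tt2 hlt h))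
end

section
/- Let n : (0,∞) → ℝ be continuous and positive, let N be an antiderivative of n on (0,∞) (so N is strictly increasing), let g_+ > 0 and a ∈ ℝ. Suppose q1, q2 : [a,∞) → (0,∞) are twice differentiable and satisfy q_i''(t) = −n(q_i(t)) q_i'(t) + g_+ for all t ≥ a (i = 1,2), with q1(a) = q2(a) and q1'(a) ≥ q2'(a). Then q1(t) ≥ q2(t) for all t ≥ a. -/
open Set

/-- Comparison of two trajectories of `q'' = -n(q) q' + g_+` with constant
positive forcing: if `q1(a) = q2(a)` and `q1'(a) ≥ q2'(a)` then `q1 ≥ q2`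
on `[a,∞)`. Here `n` is continuous and positive on `(0,∞)` and `N` is an
antiderivative of `n`. -/
theorem stmt_9 (n N q1 v1 q2 v2 : ℝ → ℝ) (gp a : ℝ)
    (hn_cont : ContinuousOn n (Ioi 0))
    (hn_pos : ∀ x ∈ Ioi (0:ℝ), 0 < n x)
    (hN : ∀ x ∈ Ioi (0:ℝ), HasDerivAt N (n x) x)
    (hgp : 0 < gp)
    (hq1_pos : ∀ t ∈ Ici a, 0 < q1 t)
    (hq2_pos : ∀ t ∈ Ici a, 0 < q2 t)
    (hq1v : ∀ t ∈ Ici a, HasDerivAt q1 (v1 t) t)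
    (hq2v : ∀ t ∈ Ici a, HasDerivAt q2 (v2 t) t)
    (hv1' : ∀ t ∈ Ici a, HasDerivAt v1 (-n (q1 t) * v1 t + gp) t)
    (hv2' : ∀ t ∈ Ici a, HasDerivAt v2 (-n (q2 t) * v2 t + gp) t)
    (h0 : q1 a = q2 a) (h0' : v2 a ≤ v1 a) :
    ∀ t ∈ Ici a, q2 t ≤ q1 t := by
  intro t0 ht0
  by_contra hlt
  push_neg at hlt
  set u : ℝ → ℝ := fun t => q1 t - q2 t with hu_def
  have hu' : ∀ t ∈ Ici a, HasDerivAt u (v1 t - v2 t) t :=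
    fun t ht => (hq1v t ht).sub (hq2v t ht)
  have hu_cont : ContinuousOn u (Ici a) :=
    fun t ht => ((hu' t ht).continuousAt).continuousWithinAt
  -- conserved quantity w = v + N(q)
  set w : ℝ → ℝ := fun τ => v1 τ + N (q1 τ) - (v2 τ + N (q2 τ)) with hw_def
  have hw' : ∀ τ ∈ Ici a, HasDerivAt w 0 τ := by
    intro τ hτ
    have hNq1 : HasDerivAt (fun τ => N (q1 τ)) (n (q1 τ) * v1 τ) τ :=
      (hN _ (hq1_pos τ hτ)).comp τ (hq1v τ hτ)
    have hNq2 : HasDerivAt (fun τ => N (q2 τ)) (n (q2 τ) * v2 τ) τ :=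
      (hN _ (hq2_pos τ hτ)).comp τ (hq2v τ hτ)
    have := ((hv1' τ hτ).add hNq1).sub ((hv2' τ hτ).add hNq2)
    convert this using 1
    · rfl
    · rfl
    · rfl
    ring
  have hw : ∀ t ∈ Ici a, v1 t - v2 t = N (q2 t) - N (q1 t) + (v1 a - v2 a) := by
    intro t ht
    have key : ∀ s ∈ Icc a t, w s = w a := by
      apply constant_of_has_deriv_right_zero
      · exact fun s hs => ((hw' s hs.1).continuousAt).continuousWithinAt
      · exact fun s hs => ((hw' s hs.1).hasDerivWithinAt)
    have h1 := key t ⟨ht, le_refl t⟩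
    have h2 : w a = v1 a - v2 a := by simp [hw_def, h0]
    rw [h2] at h1
    simp only [hw_def] at h1
    linarith
  -- N strictly monotone
  have hNmono : StrictMonoOn N (Ioi 0) := by
    apply strictMonoOn_of_deriv_pos (convex_Ioi 0)
    · exact fun x hx => ((hN x hx).continuousAt).continuousWithinAt
    · intro x hx
      rw [interior_Ioi] at hx
      rw [(hN x hx).deriv]
      exact hn_pos x hx
  -- the set of zeros of u in [a, t0]
  set K : Set ℝ := Icc a t0 ∩ u ⁻¹' {0} with hK_def
  have hK_closed : IsClosed K := by
    apply (hu_cont.mono (Icc_subset_Ici_self)).preimage_isClosed_of_isClosed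
      isClosed_Icc isClosed_singleton
  have hK_cpt : IsCompact K :=
    isCompact_Icc.of_isClosed_subset hK_closed inter_subset_left
  have hK_ne : K.Nonempty := ⟨a, ⟨le_refl a, ht0⟩, by simp [hu_def, h0]⟩
  set s := sSup K with hs_def
  have hsK : s ∈ K := hK_cpt.sSup_mem hK_ne
  have has : a ≤ s := hsK.1.1
  have hst0 : s ≤ t0 := hsK.1.2
  have hus : u s = 0 := hsK.2
  have hut0 : u t0 < 0 := by simp [hu_def]; linarith
  have hs_lt : s < t0 := by
    rcases lt_or_eq_of_le hst0 with h | h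
    · exact h
    · exfalso; rw [h] at hus; linarith
  -- u < 0 on (s, t0]
  have hneg : ∀ x ∈ Ioc s t0, u x < 0 := by
    intro x hx
    by_contra hc
    push_neg at hc
    have hxa : a ≤ x := le_trans has hx.1.le
    have hux_ne : u x ≠ 0 := by
      intro h
      have : x ∈ K := ⟨⟨hxa, hx.2⟩, h⟩
      have : x ≤ s := le_csSup hK_cpt.bddAbove this
      linarith [hx.1]
    have hux_pos : 0 < u x := lt_of_le_of_ne hc (Ne.symm hux_ne)
    have hivt : (0:ℝ) ∈ u '' Icc x t0 := by
      apply intermediate_value_Icc' hx.2 (hu_cont.mono (fun y hy => le_trans hxa hy.1))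
      exact ⟨hut0.le, hux_pos.le⟩
    obtain ⟨c, hc1, hc2⟩ := hivt
    have : c ∈ K := ⟨⟨le_trans hxa hc1.1, hc1.2⟩, hc2⟩
    have : c ≤ s := le_csSup hK_cpt.bddAbove this
    linarith [hc1.1, hx.1]
  -- u strictly monotone on [s, t0]
  have hmono : StrictMonoOn u (Icc s t0) := by
    apply strictMonoOn_of_deriv_pos (convex_Icc s t0)
    · exact hu_cont.mono (fun y hy => le_trans has hy.1)
    · intro x hx
      rw [interior_Icc] at hx
      have hxa : x ∈ Ici a := le_trans has hx.1.le
      rw [(hu' x hxa).deriv]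
      have hwx := hw x hxa
      have hxneg := hneg x ⟨hx.1, hx.2.le⟩
      have hq12 : q1 x < q2 x := by simp [hu_def] at hxneg; linarith
      have hNlt : N (q1 x) < N (q2 x) :=
        hNmono (hq1_pos x hxa) (hq2_pos x hxa) hq12
      linarith
  have := hmono ⟨le_refl s, hst0⟩ ⟨hst0, le_refl t0⟩ hs_lt
  rw [hus] at this
  linarith
end

section
/- Let q > 0 and let ψ be a real-valued function of two variables that is twice continuously differentiable on a neighborhood of the closure of Ω_q. Assume there exists C ∈ ℝ such that for all x ∈ [−1/2, 1/2]: ψ(x, 0) = 0, ∂_yψ(x, 0) = 0, ψ(x, δ_q(x)) = C + x, and ∂_yψ(x, δ_q(x)) = 0. Then ∫_{Ω_q} (∂²ψ/∂y²(x,y))² dx dy ≥ 12 ∫_{−1/2}^{1/2} x²/δ_q(x)³ dx, and the lower bound equals the value of the left-hand side for ψ_q(x,y) = x (y/δ_q(x))² (3 − 2 y/δ_q(x)). -/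
open MeasureTheory Set intervalIntegral

set_option maxHeartbeats 1000000

lemma aux_sq_int (d A : ℝ) (hd : 0 < d) :
    ∫ y in (0:ℝ)..d, (A * (6/d^2 - 12*y/d^3))^2 = 12*A^2/d^3 := by
  have hd0 : d ≠ 0 := hd.ne'
  have H : ∀ y ∈ uIcc (0:ℝ) d, HasDerivAt
      (fun y => A^2*(36/d^4)*y - A^2*(72/d^5)*y^2 + A^2*(48/d^6)*y^3)
      ((A * (6/d^2 - 12*y/d^3))^2) y := by
    intro y _
    have h1 : HasDerivAt (fun y : ℝ => A^2*(36/d^4)*y) (A^2*(36/d^4)) y := by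
      simpa using (hasDerivAt_id y).const_mul (A^2*(36/d^4))
    have h2 : HasDerivAt (fun y : ℝ => A^2*(72/d^5)*y^2) (A^2*(72/d^5)*(2*y)) y := by
      simpa using (hasDerivAt_pow 2 y).const_mul (A^2*(72/d^5))
    have h3 : HasDerivAt (fun y : ℝ => A^2*(48/d^6)*y^3) (A^2*(48/d^6)*(3*y^2)) y := by
      simpa using (hasDerivAt_pow 3 y).const_mul (A^2*(48/d^6))
    exact ((h1.sub h2).add h3).congr_deriv (by ring)
  rw [intervalIntegral.integral_eq_sub_of_hasDerivAt H (by
    apply Continuous.intervalIntegrable; continuity)]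
  field_simp
  ring

lemma aux_ibp (d A : ℝ) (hd : 0 < d) (g : ℝ → ℝ) (V : Set ℝ) (hV : IsOpen V)
    (hVd : Icc 0 d ⊆ V) (hg : ContDiffOn ℝ 2 g V)
    (h0 : g 0 = 0) (h0' : deriv g 0 = 0) (hgd : g d = A) (hd' : deriv g d = 0) :
    ∫ y in (0:ℝ)..d, deriv (deriv g) y * (6/d^2 - 12*y/d^3) = 12*A/d^3 := by
  have hd0 : d ≠ 0 := hd.ne'
  have hg1 : ContDiffOn ℝ 1 (deriv g) V := hg.deriv_of_isOpen hV (by norm_num)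
  have hgc2 : ContinuousOn (deriv (deriv g)) V :=
    hg1.continuousOn_deriv_of_isOpen hV le_rfl
  have H : ∀ y ∈ uIcc (0:ℝ) d, HasDerivAt
      (fun y => deriv g y * (6/d^2 - 12*y/d^3) + 12/d^3 * g y)
      (deriv (deriv g) y * (6/d^2 - 12*y/d^3)) y := by
    intro y hy
    have hyV : y ∈ V := hVd (by rwa [uIcc_of_le hd.le] at hy)
    have hg'd : HasDerivAt (deriv g) (deriv (deriv g) y) y :=
      ((hg1.differentiableOn (by norm_num)).differentiableAt (hV.mem_nhds hyV)).hasDerivAt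
    have hgd' : HasDerivAt g (deriv g y) y :=
      ((hg.differentiableOn (by norm_num)).differentiableAt (hV.mem_nhds hyV)).hasDerivAt
    have he : HasDerivAt (fun y : ℝ => 6/d^2 - 12*y/d^3) (-(12/d^3)) y := by
      have : HasDerivAt (fun y : ℝ => 12/d^3*y) (12/d^3) y := by
        simpa using (hasDerivAt_id y).const_mul (12/d^3)
      convert (hasDerivAt_const y (6/d^2)).sub this using 1
      · rfl
      · rfl
      · funext y; rw [Pi.sub_apply]; ring
      · ring
    exact ((hg'd.mul he).add (hgd'.const_mul (12/d^3))).congr_deriv (by ring)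
  rw [intervalIntegral.integral_eq_sub_of_hasDerivAt H (by
    apply ContinuousOn.intervalIntegrable
    rw [uIcc_of_le hd.le]
    exact ((hgc2.mono hVd).mul (by fun_prop)))]
  rw [h0, h0', hgd, hd']
  field_simp
  ring

lemma aux_lower (d A : ℝ) (hd : 0 < d) (g : ℝ → ℝ) (V : Set ℝ) (hV : IsOpen V)
    (hVd : Icc 0 d ⊆ V) (hg : ContDiffOn ℝ 2 g V)
    (h0 : g 0 = 0) (h0' : deriv g 0 = 0) (hgd : g d = A) (hd' : deriv g d = 0) :
    12*A^2/d^3 ≤ ∫ y in (0:ℝ)..d, (deriv (deriv g) y)^2 := by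
  have hd0 : d ≠ 0 := hd.ne'
  have hg1 : ContDiffOn ℝ 1 (deriv g) V := hg.deriv_of_isOpen hV (by norm_num)
  have hgc2 : ContinuousOn (deriv (deriv g)) (Icc 0 d) :=
    (hg1.continuousOn_deriv_of_isOpen hV le_rfl).mono hVd
  have hi1 : IntervalIntegrable (fun y => (deriv (deriv g) y)^2) volume 0 d := by
    apply ContinuousOn.intervalIntegrable
    rw [uIcc_of_le hd.le]; exact hgc2.pow 2
  have hi2 : IntervalIntegrable (fun y => deriv (deriv g) y * (A * (6/d^2 - 12*y/d^3))) volume 0 d := by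
    apply ContinuousOn.intervalIntegrable
    rw [uIcc_of_le hd.le]; exact hgc2.mul (by fun_prop)
  have hi3 : IntervalIntegrable (fun y => (A * (6/d^2 - 12*y/d^3))^2) volume 0 d := by
    apply Continuous.intervalIntegrable; continuity
  have hnn : (0:ℝ) ≤ ∫ y in (0:ℝ)..d, (deriv (deriv g) y - A * (6/d^2 - 12*y/d^3))^2 := by
    apply intervalIntegral.integral_nonneg hd.le
    intro y _; positivity
  have hexp : ∫ y in (0:ℝ)..d, (deriv (deriv g) y - A * (6/d^2 - 12*y/d^3))^2
      = (∫ y in (0:ℝ)..d, (deriv (deriv g) y)^2)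
        - 2 * (∫ y in (0:ℝ)..d, deriv (deriv g) y * (A * (6/d^2 - 12*y/d^3)))
        + ∫ y in (0:ℝ)..d, (A * (6/d^2 - 12*y/d^3))^2 := by
    rw [← intervalIntegral.integral_const_mul, ← intervalIntegral.integral_sub hi1 (hi2.const_mul 2),
      ← intervalIntegral.integral_add (hi1.sub (hi2.const_mul 2)) hi3]
    congr 1; funext y; ring
  have hmid : (∫ y in (0:ℝ)..d, deriv (deriv g) y * (A * (6/d^2 - 12*y/d^3))) = A * (12*A/d^3) := by
    have := aux_ibp d A hd g V hV hVd hg h0 h0' hgd hd'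
    calc (∫ y in (0:ℝ)..d, deriv (deriv g) y * (A * (6/d^2 - 12*y/d^3)))
        = ∫ y in (0:ℝ)..d, A * (deriv (deriv g) y * (6/d^2 - 12*y/d^3)) := by
          congr 1; funext y; ring
      _ = A * (12*A/d^3) := by rw [intervalIntegral.integral_const_mul, this]
  rw [hexp, hmid, aux_sq_int d A hd] at hnn
  have h12 : A * (12*A/d^3) = 12*A^2/d^3 := by ring
  linarith [hnn, h12.le]

lemma aux_fubini (a b : ℝ) (df : ℝ → ℝ) (F : ℝ × ℝ → ℝ)
    (hΩ : MeasurableSet {p : ℝ × ℝ | p.1 ∈ Ioo a b ∧ p.2 ∈ Ioo 0 (df p.1)})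
    (hF : IntegrableOn F {p : ℝ × ℝ | p.1 ∈ Ioo a b ∧ p.2 ∈ Ioo 0 (df p.1)}) :
    (∫ p in {p : ℝ × ℝ | p.1 ∈ Ioo a b ∧ p.2 ∈ Ioo 0 (df p.1)}, F p
      = ∫ x in Ioo a b, ∫ y in Ioo 0 (df x), F (x, y)) ∧
    IntegrableOn (fun x => ∫ y in Ioo 0 (df x), F (x, y)) (Ioo a b) := by
  set Ω := {p : ℝ × ℝ | p.1 ∈ Ioo a b ∧ p.2 ∈ Ioo 0 (df p.1)} with hΩdef
  have hvol : (volume : Measure (ℝ × ℝ)) = (volume : Measure ℝ).prod volume :=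
    MeasureTheory.Measure.volume_eq_prod ℝ ℝ
  have hint : Integrable (Ω.indicator F) ((volume : Measure ℝ).prod volume) := by
    rw [← hvol, integrable_indicator_iff hΩ]; exact hF
  have key : ∀ x : ℝ, (∫ y, Ω.indicator F (x, y)) =
      (Ioo a b).indicator (fun x => ∫ y in Ioo 0 (df x), F (x, y)) x := by
    intro x
    by_cases hx : x ∈ Ioo a b
    · rw [indicator_of_mem hx, ← MeasureTheory.integral_indicator measurableSet_Ioo]
      congr 1; funext y
      by_cases hy : y ∈ Ioo 0 (df x)
      · rw [indicator_of_mem hy, indicator_of_mem (by exact ⟨hx, hy⟩)]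
      · rw [indicator_of_notMem hy, indicator_of_notMem (by
          intro h; exact hy h.2)]
    · rw [indicator_of_notMem hx]
      have : ∀ y : ℝ, Ω.indicator F (x, y) = 0 := fun y =>
        indicator_of_notMem (fun h => hx h.1) _
      simp [this]
  constructor
  · rw [← MeasureTheory.integral_indicator hΩ]
    rw [hvol, MeasureTheory.integral_prod _ hint]
    simp only [key]
    rw [MeasureTheory.integral_indicator measurableSet_Ioo]
  · have hmarg : Integrable (fun x => ∫ y, Ω.indicator F (x, y)) volume :=
      hint.integral_prod_left
    rw [show (fun x => ∫ y, Ω.indicator F (x, y))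
        = (Ioo a b).indicator (fun x => ∫ y in Ioo 0 (df x), F (x, y)) from funext key] at hmarg
    rwa [integrable_indicator_iff measurableSet_Ioo] at hmarg

lemma aux_reg (ψ : ℝ × ℝ → ℝ) (U : Set (ℝ × ℝ)) (hU : IsOpen U)
    (hψ : ContDiffOn ℝ 2 ψ U) :
    ∃ G : ℝ × ℝ → ℝ, ContinuousOn G U ∧
      ∀ p ∈ U, deriv (deriv (fun y => ψ (p.1, y))) p.2 = G p := by
  set W : ℝ × ℝ → ℝ := fun z => fderiv ℝ ψ z (0, 1) with hWdef
  have hfd : ContDiffOn ℝ 1 (fderiv ℝ ψ) U := hψ.fderiv_of_isOpen hU (by norm_num)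
  have hW1 : ContDiffOn ℝ 1 W U :=
    (ContinuousLinearMap.apply ℝ ℝ ((0:ℝ), (1:ℝ))).contDiff.comp_contDiffOn hfd
  have slice : ∀ (f : ℝ × ℝ → ℝ), DifferentiableOn ℝ f U →
      ∀ p ∈ U, HasDerivAt (fun y => f (p.1, y)) (fderiv ℝ f p (0, 1)) p.2 := by
    intro f hf p hp
    have hdiff : DifferentiableAt ℝ f p := hf.differentiableAt (hU.mem_nhds hp)
    have hc : HasDerivAt (fun y : ℝ => ((p.1, y) : ℝ × ℝ)) ((0:ℝ), (1:ℝ)) p.2 :=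
      (hasDerivAt_const p.2 p.1).prodMk (hasDerivAt_id p.2)
    have := hdiff.hasFDerivAt.comp_hasDerivAt p.2 hc
    exact this
  refine ⟨fun z => fderiv ℝ W z (0, 1), ?_, ?_⟩
  · exact (ContinuousLinearMap.apply ℝ ℝ ((0:ℝ), (1:ℝ))).continuous.comp_continuousOn
      (hW1.continuousOn_fderiv_of_isOpen hU le_rfl)
  · intro p hp
    have hψd : DifferentiableOn ℝ ψ U := hψ.differentiableOn (by norm_num)
    have hWd : DifferentiableOn ℝ W U := hW1.differentiableOn (by norm_num)
    have hEq : (fun y => deriv (fun y' => ψ (p.1, y')) y) =ᶠ[nhds p.2]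
        (fun y => W (p.1, y)) := by
      have hnb : {y : ℝ | (p.1, y) ∈ U} ∈ nhds p.2 := by
        have : Continuous (fun y : ℝ => ((p.1, y) : ℝ × ℝ)) := by fun_prop
        exact this.continuousAt.preimage_mem_nhds (hU.mem_nhds (by simpa using hp))
      filter_upwards [hnb] with y hy
      exact (slice ψ hψd (p.1, y) hy).deriv
    rw [hEq.deriv_eq]
    exact (slice W hWd p hp).deriv

lemma aux_cubic (x d : ℝ) (hd : d ≠ 0) :
    deriv (deriv (fun y => x * (y / d) ^ 2 * (3 - 2 * (y / d)))) =
      fun y => 6 * x / d ^ 2 - 12 * x * y / d ^ 3 := by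
  have hfun : (fun y : ℝ => x * (y / d) ^ 2 * (3 - 2 * (y / d)))
      = fun y => (3 * x / d ^ 2) * y ^ 2 - (2 * x / d ^ 3) * y ^ 3 := by
    funext y; field_simp
  rw [hfun]
  have hd1 : deriv (fun y : ℝ => (3 * x / d ^ 2) * y ^ 2 - (2 * x / d ^ 3) * y ^ 3)
      = fun y => (6 * x / d ^ 2) * y - (6 * x / d ^ 3) * y ^ 2 := by
    funext y
    have h : HasDerivAt (fun y : ℝ => (3 * x / d ^ 2) * y ^ 2 - (2 * x / d ^ 3) * y ^ 3)
        ((3 * x / d ^ 2) * (2 * y ^ 1) - (2 * x / d ^ 3) * (3 * y ^ 2)) y :=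
      ((hasDerivAt_pow 2 y).const_mul _).sub ((hasDerivAt_pow 3 y).const_mul _)
    rw [h.deriv]; ring
  rw [hd1]
  funext y
  have h : HasDerivAt (fun y : ℝ => (6 * x / d ^ 2) * y - (6 * x / d ^ 3) * y ^ 2)
      ((6 * x / d ^ 2) * 1 - (6 * x / d ^ 3) * (2 * y ^ 1)) y :=
    ((hasDerivAt_id y).const_mul _).sub ((hasDerivAt_pow 2 y).const_mul _)
  rw [h.deriv]; ring

/-- Lower bound on the reduced Dirichlet energy in the lubrication gap
`Ω_q = {(x,y) : |x| < 1/2, 0 < y < δ_q(x)}` with `δ_q(x) = 1 + q - √(1-x²)`: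
for any stream function `ψ`, `C²` on a neighborhood of the closure of `Ω_q`,
with `ψ(x,0) = 0`, `∂_yψ(x,0) = 0`, `ψ(x,δ_q(x)) = C + x`,
`∂_yψ(x,δ_q(x)) = 0`, one has
`∫_{Ω_q} (∂_{yy}ψ)² ≥ 12 ∫_{-1/2}^{1/2} x²/δ_q(x)³ dx`, and the lower bound
is attained for `ψ_q(x,y) = x (y/δ_q(x))² (3 - 2 y/δ_q(x))`. -/
theorem stmt_12 (q : ℝ) (hq : 0 < q) (ψ : ℝ × ℝ → ℝ) (C : ℝ)
    (hψ : ∃ U : Set (ℝ × ℝ), IsOpen U ∧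
      closure {p : ℝ × ℝ | p.1 ∈ Ioo (-(1:ℝ)/2) (1/2) ∧
        p.2 ∈ Ioo 0 (1 + q - Real.sqrt (1 - p.1 ^ 2))} ⊆ U ∧
      ContDiffOn ℝ 2 ψ U)
    (hb1 : ∀ x ∈ Icc (-(1:ℝ)/2) (1/2), ψ (x, 0) = 0)
    (hb2 : ∀ x ∈ Icc (-(1:ℝ)/2) (1/2), deriv (fun y => ψ (x, y)) 0 = 0)
    (hb3 : ∀ x ∈ Icc (-(1:ℝ)/2) (1/2),
      ψ (x, 1 + q - Real.sqrt (1 - x ^ 2)) = C + x)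
    (hb4 : ∀ x ∈ Icc (-(1:ℝ)/2) (1/2),
      deriv (fun y => ψ (x, y)) (1 + q - Real.sqrt (1 - x ^ 2)) = 0) :
    (12 * ∫ x in (-(1:ℝ)/2)..(1/2), x ^ 2 / (1 + q - Real.sqrt (1 - x ^ 2)) ^ 3) ≤
      (∫ p in {p : ℝ × ℝ | p.1 ∈ Ioo (-(1:ℝ)/2) (1/2) ∧
          p.2 ∈ Ioo 0 (1 + q - Real.sqrt (1 - p.1 ^ 2))},
        (deriv (deriv (fun y => ψ (p.1, y))) p.2) ^ 2) ∧
    (∫ p in {p : ℝ × ℝ | p.1 ∈ Ioo (-(1:ℝ)/2) (1/2) ∧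
        p.2 ∈ Ioo 0 (1 + q - Real.sqrt (1 - p.1 ^ 2))},
      (deriv (deriv (fun y =>
        p.1 * (y / (1 + q - Real.sqrt (1 - p.1 ^ 2))) ^ 2 *
          (3 - 2 * (y / (1 + q - Real.sqrt (1 - p.1 ^ 2)))))) p.2) ^ 2) =
      12 * ∫ x in (-(1:ℝ)/2)..(1/2), x ^ 2 / (1 + q - Real.sqrt (1 - x ^ 2)) ^ 3 := by
  obtain ⟨U, hUopen, hUsub, hψU⟩ := hψ
  -- basic facts about the gap function
  have hDpos : ∀ x : ℝ, 0 < 1 + q - Real.sqrt (1 - x ^ 2) := by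
    intro x
    have h1 : Real.sqrt (1 - x ^ 2) ≤ 1 := by
      have := Real.sqrt_le_sqrt (show 1 - x ^ 2 ≤ 1 by nlinarith)
      rwa [Real.sqrt_one] at this
    linarith
  have hDcont : Continuous (fun x : ℝ => 1 + q - Real.sqrt (1 - x ^ 2)) := by
    continuity
  have hDle : ∀ x : ℝ, 1 + q - Real.sqrt (1 - x ^ 2) ≤ 1 + q := by
    intro x
    have := Real.sqrt_nonneg (1 - x ^ 2)
    linarith
  have hΩopen : IsOpen {p : ℝ × ℝ | p.1 ∈ Ioo (-(1:ℝ)/2) (1/2) ∧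
      p.2 ∈ Ioo 0 (1 + q - Real.sqrt (1 - p.1 ^ 2))} := by
    have : {p : ℝ × ℝ | p.1 ∈ Ioo (-(1:ℝ)/2) (1/2) ∧
        p.2 ∈ Ioo 0 (1 + q - Real.sqrt (1 - p.1 ^ 2))} =
        ((fun p : ℝ × ℝ => p.1) ⁻¹' Ioo (-(1:ℝ)/2) (1/2)) ∩
        ({p : ℝ × ℝ | 0 < p.2} ∩ {p : ℝ × ℝ | p.2 < 1 + q - Real.sqrt (1 - p.1 ^ 2)}) := by
      ext p; simp [mem_Ioo, and_assoc]
    rw [this]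
    exact (isOpen_Ioo.preimage continuous_fst).inter
      ((isOpen_lt continuous_const continuous_snd).inter
        (isOpen_lt continuous_snd (hDcont.comp continuous_fst)))
  set Ω := {p : ℝ × ℝ | p.1 ∈ Ioo (-(1:ℝ)/2) (1/2) ∧
      p.2 ∈ Ioo 0 (1 + q - Real.sqrt (1 - p.1 ^ 2))} with hΩdef
  -- closure slices
  have hsliceU : ∀ x ∈ Ioo (-(1:ℝ)/2) (1/2),
      ∀ y ∈ Icc 0 (1 + q - Real.sqrt (1 - x ^ 2)), (x, y) ∈ U := by
    intro x hx y hy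
    apply hUsub
    have h1 : ({x} ×ˢ Ioo 0 (1 + q - Real.sqrt (1 - x ^ 2)) : Set (ℝ × ℝ)) ⊆ Ω := by
      rintro ⟨a, b⟩ ⟨ha, hb⟩
      simp only [mem_singleton_iff] at ha
      subst ha
      exact ⟨hx, hb⟩
    have h2 := closure_mono h1
    rw [closure_prod_eq, closure_singleton, closure_Ioo (hDpos x).ne] at h2
    exact h2 ⟨rfl, hy⟩
  -- boundedness
  have hΩbd : Bornology.IsBounded Ω := by
    apply ((Metric.isBounded_Icc (-(1:ℝ)/2) (1/2)).prod (Metric.isBounded_Icc 0 (1+q))).subset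
    rintro ⟨x, y⟩ ⟨hx, hy⟩
    exact ⟨⟨hx.1.le, hx.2.le⟩, ⟨hy.1.le, hy.2.le.trans (hDle x)⟩⟩
  have hcompact : IsCompact (closure Ω) :=
    Metric.isCompact_of_isClosed_isBounded isClosed_closure hΩbd.closure
  -- Part 1
  have part1 : (12 * ∫ x in (-(1:ℝ)/2)..(1/2),
      x ^ 2 / (1 + q - Real.sqrt (1 - x ^ 2)) ^ 3) ≤
      ∫ p in Ω, (deriv (deriv (fun y => ψ (p.1, y))) p.2) ^ 2 := by
    obtain ⟨G, hGcont, hGeq⟩ := aux_reg ψ U hUopen hψU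
    have hFeq : EqOn (fun p : ℝ × ℝ => (G p) ^ 2)
        (fun p : ℝ × ℝ => (deriv (deriv (fun y => ψ (p.1, y))) p.2) ^ 2) Ω := by
      intro p hp
      simp only
      rw [hGeq p (hUsub (subset_closure hp))]
    have hG2int : IntegrableOn (fun p : ℝ × ℝ => (G p) ^ 2) Ω :=
      (((hGcont.mono hUsub).pow 2).integrableOn_compact hcompact).mono_set subset_closure
    have hFint : IntegrableOn
        (fun p : ℝ × ℝ => (deriv (deriv (fun y => ψ (p.1, y))) p.2) ^ 2) Ω :=
      hG2int.congr_fun hFeq hΩopen.measurableSet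
    obtain ⟨heq, hmarg⟩ := aux_fubini (-(1:ℝ)/2) (1/2)
      (fun x => 1 + q - Real.sqrt (1 - x ^ 2))
      (fun p : ℝ × ℝ => (deriv (deriv (fun y => ψ (p.1, y))) p.2) ^ 2)
      hΩopen.measurableSet hFint
    rw [heq]
    have hlow : ∀ x ∈ Ioo (-(1:ℝ)/2) (1/2),
        12 * (C + x) ^ 2 / (1 + q - Real.sqrt (1 - x ^ 2)) ^ 3 ≤
        ∫ y in Ioo 0 (1 + q - Real.sqrt (1 - x ^ 2)),
          (deriv (deriv (fun y => ψ (x, y))) y) ^ 2 := by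
      intro x hx
      have hxI : x ∈ Icc (-(1:ℝ)/2) (1/2) := Ioo_subset_Icc_self hx
      have hV : IsOpen {y : ℝ | (x, y) ∈ U} := hUopen.preimage (by fun_prop)
      have hVd : Icc 0 (1 + q - Real.sqrt (1 - x ^ 2)) ⊆ {y : ℝ | (x, y) ∈ U} :=
        fun y hy => hsliceU x hx y hy
      have hg : ContDiffOn ℝ 2 (fun y => ψ (x, y)) {y : ℝ | (x, y) ∈ U} := by
        apply hψU.comp
        · exact (contDiff_const.prodMk contDiff_id).contDiffOn
        · intro y hy; exact hy
      have := aux_lower (1 + q - Real.sqrt (1 - x ^ 2)) (C + x) (hDpos x)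
        (fun y => ψ (x, y)) _ hV hVd hg (hb1 x hxI) (hb2 x hxI) (hb3 x hxI) (hb4 x hxI)
      rwa [intervalIntegral.integral_of_le (hDpos x).le,
        integral_Ioc_eq_integral_Ioo] at this
    have hlbc : Continuous
        (fun x : ℝ => 12 * (C + x) ^ 2 / (1 + q - Real.sqrt (1 - x ^ 2)) ^ 3) := by
      apply Continuous.div (by fun_prop) (by fun_prop)
        (fun x => pow_ne_zero 3 (hDpos x).ne')
    have hlbint : IntegrableOn
        (fun x : ℝ => 12 * (C + x) ^ 2 / (1 + q - Real.sqrt (1 - x ^ 2)) ^ 3)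
        (Ioo (-(1:ℝ)/2) (1/2)) :=
      (hlbc.continuousOn.integrableOn_compact isCompact_Icc).mono_set Ioo_subset_Icc_self
    have hmono := setIntegral_mono_on hlbint hmarg measurableSet_Ioo hlow
    refine le_trans ?_ hmono
    have hIoo : (∫ x in Ioo (-(1:ℝ)/2) (1/2),
        12 * (C + x) ^ 2 / (1 + q - Real.sqrt (1 - x ^ 2)) ^ 3)
        = ∫ x in (-(1:ℝ)/2)..(1/2),
          12 * (C + x) ^ 2 / (1 + q - Real.sqrt (1 - x ^ 2)) ^ 3 := by
      rw [intervalIntegral.integral_of_le (by norm_num : (-(1:ℝ)/2) ≤ 1/2),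
        integral_Ioc_eq_integral_Ioo]
    rw [hIoo]
    -- expand the square and use oddness
    have hc1 : Continuous (fun x : ℝ => 12 * C ^ 2 * (1 / (1 + q - Real.sqrt (1 - x ^ 2)) ^ 3)) := by
      apply Continuous.mul continuous_const
      exact Continuous.div continuous_const (by fun_prop)
        (fun x => pow_ne_zero 3 (hDpos x).ne')
    have hc2 : Continuous (fun x : ℝ => 24 * C * (x / (1 + q - Real.sqrt (1 - x ^ 2)) ^ 3)) := by
      apply Continuous.mul continuous_const
      exact Continuous.div continuous_id (by fun_prop)
        (fun x => pow_ne_zero 3 (hDpos x).ne')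
    have hc3 : Continuous (fun x : ℝ => 12 * (x ^ 2 / (1 + q - Real.sqrt (1 - x ^ 2)) ^ 3)) := by
      apply Continuous.mul continuous_const
      exact Continuous.div (by fun_prop) (by fun_prop)
        (fun x => pow_ne_zero 3 (hDpos x).ne')
    have hint1 := hc1.intervalIntegrable (μ := volume) (-(1:ℝ)/2) (1/2)
    have hint2 := hc2.intervalIntegrable (μ := volume) (-(1:ℝ)/2) (1/2)
    have hint3 := hc3.intervalIntegrable (μ := volume) (-(1:ℝ)/2) (1/2)
    have hsplit : (∫ x in (-(1:ℝ)/2)..(1/2),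
        12 * (C + x) ^ 2 / (1 + q - Real.sqrt (1 - x ^ 2)) ^ 3)
        = (∫ x in (-(1:ℝ)/2)..(1/2), 12 * C ^ 2 * (1 / (1 + q - Real.sqrt (1 - x ^ 2)) ^ 3))
          + ((∫ x in (-(1:ℝ)/2)..(1/2), 24 * C * (x / (1 + q - Real.sqrt (1 - x ^ 2)) ^ 3))
          + (∫ x in (-(1:ℝ)/2)..(1/2), 12 * (x ^ 2 / (1 + q - Real.sqrt (1 - x ^ 2)) ^ 3))) := by
      rw [← intervalIntegral.integral_add hint2 hint3,
        ← intervalIntegral.integral_add hint1 (hint2.add hint3)]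
      congr 1; funext x; ring
    rw [hsplit]
    have hodd : (∫ x in (-(1:ℝ)/2)..(1/2), x / (1 + q - Real.sqrt (1 - x ^ 2)) ^ 3) = 0 := by
      set f : ℝ → ℝ := fun x => x / (1 + q - Real.sqrt (1 - x ^ 2)) ^ 3 with hf
      have h1 : (∫ x in (-(1:ℝ)/2)..(1/2), f (-x)) = ∫ x in (-(1:ℝ)/2)..(1/2), f x := by
        rw [intervalIntegral.integral_comp_neg]
        congr 1 <;> norm_num
      have h2 : (∫ x in (-(1:ℝ)/2)..(1/2), f (-x))
          = - ∫ x in (-(1:ℝ)/2)..(1/2), f x := by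
        have hfe : (fun x : ℝ => f (-x)) = fun x => -(f x) := by
          funext x
          simp only [hf, neg_sq, neg_div]
        rw [hfe, intervalIntegral.integral_neg]
      have : (∫ x in (-(1:ℝ)/2)..(1/2), f x) = 0 := by linarith [h1, h2]
      exact this
    have hmid : (∫ x in (-(1:ℝ)/2)..(1/2), 24 * C * (x / (1 + q - Real.sqrt (1 - x ^ 2)) ^ 3)) = 0 := by
      rw [intervalIntegral.integral_const_mul, hodd, mul_zero]
    have hfst : 0 ≤ ∫ x in (-(1:ℝ)/2)..(1/2), 12 * C ^ 2 * (1 / (1 + q - Real.sqrt (1 - x ^ 2)) ^ 3) := by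
      apply intervalIntegral.integral_nonneg (by norm_num)
      intro x _
      have := hDpos x
      positivity
    have hthd : (∫ x in (-(1:ℝ)/2)..(1/2), 12 * (x ^ 2 / (1 + q - Real.sqrt (1 - x ^ 2)) ^ 3))
        = 12 * ∫ x in (-(1:ℝ)/2)..(1/2), x ^ 2 / (1 + q - Real.sqrt (1 - x ^ 2)) ^ 3 :=
      intervalIntegral.integral_const_mul 12 _
    rw [hmid, hthd]
    linarith [hfst]
  have part2 : (∫ p in Ω,
      (deriv (deriv (fun y =>
        p.1 * (y / (1 + q - Real.sqrt (1 - p.1 ^ 2))) ^ 2 *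
          (3 - 2 * (y / (1 + q - Real.sqrt (1 - p.1 ^ 2)))))) p.2) ^ 2) =
      12 * ∫ x in (-(1:ℝ)/2)..(1/2), x ^ 2 / (1 + q - Real.sqrt (1 - x ^ 2)) ^ 3 := by
    have hrw : (fun p : ℝ × ℝ => (deriv (deriv (fun y =>
        p.1 * (y / (1 + q - Real.sqrt (1 - p.1 ^ 2))) ^ 2 *
          (3 - 2 * (y / (1 + q - Real.sqrt (1 - p.1 ^ 2)))))) p.2) ^ 2)
        = fun p : ℝ × ℝ => (6 * p.1 / (1 + q - Real.sqrt (1 - p.1 ^ 2)) ^ 2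
            - 12 * p.1 * p.2 / (1 + q - Real.sqrt (1 - p.1 ^ 2)) ^ 3) ^ 2 := by
      funext p
      rw [aux_cubic p.1 _ (hDpos p.1).ne']
    rw [show (∫ p in Ω, (deriv (deriv (fun y =>
        p.1 * (y / (1 + q - Real.sqrt (1 - p.1 ^ 2))) ^ 2 *
          (3 - 2 * (y / (1 + q - Real.sqrt (1 - p.1 ^ 2)))))) p.2) ^ 2)
        = ∫ p in Ω, (6 * p.1 / (1 + q - Real.sqrt (1 - p.1 ^ 2)) ^ 2
            - 12 * p.1 * p.2 / (1 + q - Real.sqrt (1 - p.1 ^ 2)) ^ 3) ^ 2 from by rw [hrw]]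
    have hF2cont : Continuous (fun p : ℝ × ℝ =>
        (6 * p.1 / (1 + q - Real.sqrt (1 - p.1 ^ 2)) ^ 2
          - 12 * p.1 * p.2 / (1 + q - Real.sqrt (1 - p.1 ^ 2)) ^ 3) ^ 2) := by
      apply Continuous.pow
      apply Continuous.sub
      · exact Continuous.div (by fun_prop) (by fun_prop)
          (fun p => pow_ne_zero 2 (hDpos p.1).ne')
      · exact Continuous.div (by fun_prop) (by fun_prop)
          (fun p => pow_ne_zero 3 (hDpos p.1).ne')
    have hF2int : IntegrableOn (fun p : ℝ × ℝ =>
        (6 * p.1 / (1 + q - Real.sqrt (1 - p.1 ^ 2)) ^ 2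
          - 12 * p.1 * p.2 / (1 + q - Real.sqrt (1 - p.1 ^ 2)) ^ 3) ^ 2) Ω :=
      (hF2cont.continuousOn.integrableOn_compact hcompact).mono_set subset_closure
    obtain ⟨heq, -⟩ := aux_fubini (-(1:ℝ)/2) (1/2)
      (fun x => 1 + q - Real.sqrt (1 - x ^ 2))
      (fun p : ℝ × ℝ =>
        (6 * p.1 / (1 + q - Real.sqrt (1 - p.1 ^ 2)) ^ 2
          - 12 * p.1 * p.2 / (1 + q - Real.sqrt (1 - p.1 ^ 2)) ^ 3) ^ 2)
      hΩopen.measurableSet hF2int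
    rw [heq]
    have hinner : ∀ x ∈ Ioo (-(1:ℝ)/2) (1/2),
        (∫ y in Ioo 0 (1 + q - Real.sqrt (1 - x ^ 2)),
          (6 * x / (1 + q - Real.sqrt (1 - x ^ 2)) ^ 2
            - 12 * x * y / (1 + q - Real.sqrt (1 - x ^ 2)) ^ 3) ^ 2)
        = 12 * (x ^ 2 / (1 + q - Real.sqrt (1 - x ^ 2)) ^ 3) := by
      intro x _
      have h1 : (∫ y in Ioo 0 (1 + q - Real.sqrt (1 - x ^ 2)),
          (6 * x / (1 + q - Real.sqrt (1 - x ^ 2)) ^ 2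
            - 12 * x * y / (1 + q - Real.sqrt (1 - x ^ 2)) ^ 3) ^ 2)
          = ∫ y in (0:ℝ)..(1 + q - Real.sqrt (1 - x ^ 2)),
            (6 * x / (1 + q - Real.sqrt (1 - x ^ 2)) ^ 2
              - 12 * x * y / (1 + q - Real.sqrt (1 - x ^ 2)) ^ 3) ^ 2 := by
        rw [intervalIntegral.integral_of_le (hDpos x).le, integral_Ioc_eq_integral_Ioo]
      rw [h1]
      have h2 : (∫ y in (0:ℝ)..(1 + q - Real.sqrt (1 - x ^ 2)),
          (6 * x / (1 + q - Real.sqrt (1 - x ^ 2)) ^ 2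
            - 12 * x * y / (1 + q - Real.sqrt (1 - x ^ 2)) ^ 3) ^ 2)
          = ∫ y in (0:ℝ)..(1 + q - Real.sqrt (1 - x ^ 2)),
            (x * (6 / (1 + q - Real.sqrt (1 - x ^ 2)) ^ 2
              - 12 * y / (1 + q - Real.sqrt (1 - x ^ 2)) ^ 3)) ^ 2 := by
        congr 1; funext y; ring
      rw [h2, aux_sq_int (1 + q - Real.sqrt (1 - x ^ 2)) x (hDpos x)]
      ring
    rw [setIntegral_congr_fun measurableSet_Ioo (fun x hx => hinner x hx)]
    rw [show (∫ x in Ioo (-(1:ℝ)/2) (1/2), 12 * (x ^ 2 / (1 + q - Real.sqrt (1 - x ^ 2)) ^ 3))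
        = ∫ x in (-(1:ℝ)/2)..(1/2), 12 * (x ^ 2 / (1 + q - Real.sqrt (1 - x ^ 2)) ^ 3) from by
      rw [intervalIntegral.integral_of_le (by norm_num : (-(1:ℝ)/2) ≤ 1/2),
        integral_Ioc_eq_integral_Ioo]]
    rw [intervalIntegral.integral_const_mul]
  exact ⟨part1, part2⟩
end

section
/- Define m_D(q) := 12 ∫_{−1/2}^{1/2} x² / (1 + q − √(1 − x²))³ dx for q > 0. Then lim_{q→0⁺} q^{3/2} · m_D(q) = 3√2 π; equivalently, m_D(q) = 3√2 π (1 + ε(q)) / q^{3/2} with ε(q) → 0 as q → 0⁺. -/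
open Set Filter MeasureTheory Real Topology

noncomputable def phi13 (t : ℝ) : ℝ := t ^ 2 / (1 + t ^ 2 / 2) ^ 3

lemma phi13_denom_pos (t : ℝ) : (0:ℝ) < 1 + t ^ 2 / 2 := by positivity

lemma phi13_nonneg (t : ℝ) : 0 ≤ phi13 t := by unfold phi13; positivity

lemma phi13_le (t : ℝ) : phi13 t ≤ (1 + t ^ 2)⁻¹ := by
  rw [phi13, div_le_iff₀ (by positivity), ← one_div, div_mul_eq_mul_div, le_div_iff₀ (by positivity)]
  nlinarith [sq_nonneg t, sq_nonneg (t^2), pow_pos (phi13_denom_pos t) 3, sq_nonneg (t^3)]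

lemma phi13_cont : Continuous phi13 := by
  apply Continuous.div (by continuity) (by continuity)
  intro t; positivity

lemma phi13_integrable : Integrable phi13 := by
  refine (integrable_inv_one_add_sq).mono' phi13_cont.aestronglyMeasurable ?_
  filter_upwards with t
  rw [Real.norm_eq_abs, abs_of_nonneg (phi13_nonneg t)]
  exact phi13_le t

noncomputable def H13 (t : ℝ) : ℝ :=
  Real.sqrt 2 / 4 * Real.arctan (t / Real.sqrt 2) + 1 / 4 * (t / (1 + t ^ 2 / 2))
    - 1 / 2 * (t / (1 + t ^ 2 / 2) ^ 2)

lemma H13_deriv (t : ℝ) : HasDerivAt H13 (phi13 t) t := by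
  have h2 : (0:ℝ) < Real.sqrt 2 := by positivity
  have hd : (0:ℝ) < 1 + t ^ 2 / 2 := phi13_denom_pos t
  have ha : HasDerivAt (fun t : ℝ => Real.arctan (t / Real.sqrt 2))
      (1 / (1 + (t / Real.sqrt 2) ^ 2) * (1 / Real.sqrt 2)) t := by
    exact (Real.hasDerivAt_arctan (t / Real.sqrt 2)).comp t
      ((hasDerivAt_id t).div_const (Real.sqrt 2))
  have hb : HasDerivAt (fun t : ℝ => t / (1 + t ^ 2 / 2))
      ((1 * (1 + t ^ 2 / 2) - t * ((2:ℕ) * t ^ (2-1) / 2)) / (1 + t ^ 2 / 2) ^ 2) t := by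
    exact (hasDerivAt_id t).div
      (((hasDerivAt_pow 2 t).div_const 2).const_add 1) hd.ne'
  have hc : HasDerivAt (fun t : ℝ => t / (1 + t ^ 2 / 2) ^ 2)
      ((1 * ((1 + t ^ 2 / 2) ^ 2) - t * ((2:ℕ) * (1 + t ^ 2 / 2) ^ (2-1) * ((2:ℕ) * t ^ (2-1) / 2)))
        / ((1 + t ^ 2 / 2) ^ 2) ^ 2) t := by
    exact (hasDerivAt_id t).div
      ((((hasDerivAt_pow 2 t).div_const 2).const_add 1).pow 2) (by positivity)
  have := ((ha.const_mul (Real.sqrt 2 / 4)).add (hb.const_mul (1/4))).sub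
    (hc.const_mul (1/2))
  convert this using 1
  · rfl
  · rfl
  · rfl
  have hs : Real.sqrt 2 ^ 2 = 2 := Real.sq_sqrt (by norm_num)
  have h1 : 1 + (t / Real.sqrt 2) ^ 2 = 1 + t ^ 2 / 2 := by
    rw [div_pow, hs]
  rw [h1, phi13]
  field_simp
  ring_nf

lemma H13_odd (t : ℝ) : H13 (-t) = - H13 t := by
  unfold H13
  rw [neg_div, Real.arctan_neg]
  ring

lemma H13_tendsto : Tendsto H13 atTop (𝓝 (Real.sqrt 2 / 4 * (π / 2))) := by
  have h2 : (0:ℝ) < Real.sqrt 2 := by positivity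
  have ha : Tendsto (fun t : ℝ => Real.arctan (t / Real.sqrt 2)) atTop (𝓝 (π / 2)) := by
    exact (Real.tendsto_arctan_atTop.mono_right nhdsWithin_le_nhds).comp
      (tendsto_id.atTop_div_const h2)
  have hb : Tendsto (fun t : ℝ => t / (1 + t ^ 2 / 2)) atTop (𝓝 0) := by
    apply squeeze_zero' (g := fun t : ℝ => 2 / t)
    · filter_upwards [eventually_ge_atTop (0:ℝ)] with t ht; positivity
    · filter_upwards [eventually_ge_atTop (1:ℝ)] with t ht
      rw [div_le_div_iff₀ (by positivity) (by linarith)]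
      nlinarith
    · exact tendsto_const_nhds.div_atTop tendsto_id
  have hc : Tendsto (fun t : ℝ => t / (1 + t ^ 2 / 2) ^ 2) atTop (𝓝 0) := by
    apply squeeze_zero' (g := fun t : ℝ => 2 / t)
    · filter_upwards [eventually_ge_atTop (0:ℝ)] with t ht; positivity
    · filter_upwards [eventually_ge_atTop (1:ℝ)] with t ht
      rw [div_le_div_iff₀ (by positivity) (by linarith)]
      nlinarith [sq_nonneg t, sq_nonneg (t^2), sq_nonneg (t-1)]
    · exact tendsto_const_nhds.div_atTop tendsto_id
  have := ((ha.const_mul (Real.sqrt 2 / 4)).add (hb.const_mul (1/4))).sub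
    (hc.const_mul (1/2))
  rw [show Real.sqrt 2 / 4 * (π / 2)
    = Real.sqrt 2 / 4 * (π / 2) + 1 / 4 * 0 - 1 / 2 * 0 by ring]
  exact this

lemma integral_phi13 : ∫ t, phi13 t = Real.sqrt 2 * π / 4 := by
  have hFTC : ∀ R : ℝ, ∫ t in (-R)..R, phi13 t = H13 R - H13 (-R) := fun R =>
    intervalIntegral.integral_eq_sub_of_hasDerivAt (fun t _ => H13_deriv t)
      (phi13_cont.intervalIntegrable _ _)
  have h1 : Tendsto (fun R : ℝ => ∫ t in (-R)..R, phi13 t) atTop (𝓝 (∫ t, phi13 t)) :=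
    intervalIntegral_tendsto_integral phi13_integrable tendsto_neg_atTop_atBot tendsto_id
  have h2 : Tendsto (fun R : ℝ => ∫ t in (-R)..R, phi13 t) atTop
      (𝓝 (Real.sqrt 2 * π / 4)) := by
    have : Tendsto (fun R : ℝ => H13 R - H13 (-R)) atTop (𝓝 (Real.sqrt 2 * π / 4)) := by
      have := H13_tendsto.sub (H13_tendsto.neg.congr (fun R => (H13_odd R).symm))
      convert this using 2
      ring
    exact Tendsto.congr (fun R => (hFTC R).symm) this
  exact tendsto_nhds_unique h1 h2

noncomputable def F13 (q t : ℝ) : ℝ :=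
  Set.indicator (Ioc (-(1 / (2 * Real.sqrt q))) (1 / (2 * Real.sqrt q)))
    (fun t => t ^ 2 / (1 + (1 - Real.sqrt (1 - q * t ^ 2)) / q) ^ 3) t

lemma sqrt_one_sub_le (u : ℝ) (hu : 0 ≤ u) (hu1 : u ≤ 1) :
    Real.sqrt (1 - u) ≤ 1 - u / 2 := by
  have h : (1:ℝ) - u ≤ (1 - u / 2) ^ 2 := by nlinarith
  calc Real.sqrt (1 - u) ≤ Real.sqrt ((1 - u / 2) ^ 2) := Real.sqrt_le_sqrt h
    _ = |1 - u / 2| := Real.sqrt_sq_eq_abs _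
    _ = 1 - u / 2 := abs_of_nonneg (by linarith)

lemma F13_denom_pos {q : ℝ} (hq : 0 < q) (t : ℝ) :
    (0:ℝ) < 1 + (1 - Real.sqrt (1 - q * t ^ 2)) / q := by
  have h1 : Real.sqrt (1 - q * t ^ 2) ≤ 1 := Real.sqrt_le_one.mpr (by nlinarith)
  have : 0 ≤ (1 - Real.sqrt (1 - q * t ^ 2)) / q := by
    apply div_nonneg (by linarith) hq.le
  linarith

lemma F13_cont {q : ℝ} (hq : 0 < q) :
    Continuous (fun t => t ^ 2 / (1 + (1 - Real.sqrt (1 - q * t ^ 2)) / q) ^ 3) := by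
  apply Continuous.div (by continuity)
  · continuity
  · intro t
    exact pow_ne_zero 3 (F13_denom_pos hq t).ne'

lemma F13_bound {q : ℝ} (hq : 0 < q) (t : ℝ) : ‖F13 q t‖ ≤ phi13 t := by
  unfold F13
  by_cases ht : t ∈ Ioc (-(1 / (2 * Real.sqrt q))) (1 / (2 * Real.sqrt q))
  · rw [Set.indicator_of_mem ht]
    have hd := F13_denom_pos hq t
    rw [Real.norm_eq_abs, abs_of_nonneg (by positivity)]
    have hsq : (0:ℝ) < Real.sqrt q := Real.sqrt_pos.mpr hq
    have ht2 : q * t ^ 2 ≤ 1 / 4 := by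
      have h1 : |t| ≤ 1 / (2 * Real.sqrt q) := abs_le.mpr ⟨by linarith [ht.1], ht.2⟩
      have h2 : t ^ 2 ≤ (1 / (2 * Real.sqrt q)) ^ 2 := by
        rw [← sq_abs]; exact pow_le_pow_left₀ (abs_nonneg t) h1 2
      have h3 : (1 / (2 * Real.sqrt q)) ^ 2 = 1 / (4 * q) := by
        rw [div_pow, one_pow, mul_pow, Real.sq_sqrt hq.le]
        norm_num
      rw [h3] at h2
      rw [show q * t ^ 2 = t ^ 2 * q by ring]
      calc t ^ 2 * q ≤ 1 / (4 * q) * q := by nlinarith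
        _ = 1 / 4 := by field_simp
    have hkey : t ^ 2 / 2 ≤ (1 - Real.sqrt (1 - q * t ^ 2)) / q := by
      have := sqrt_one_sub_le (q * t ^ 2) (by positivity) (by linarith)
      rw [le_div_iff₀ hq]
      nlinarith
    unfold phi13
    apply div_le_div_of_nonneg_left (by positivity) (by positivity)
    exact pow_le_pow_left₀ (by positivity) (by linarith) 3
  · rw [Set.indicator_of_notMem ht, norm_zero]
    exact phi13_nonneg t

lemma F13_tendsto (t : ℝ) :
    Tendsto (fun q => F13 q t) (nhdsWithin 0 (Ioi 0)) (𝓝 (phi13 t)) := by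
  have hs : Tendsto (fun q : ℝ => Real.sqrt (1 - q * t ^ 2)) (nhdsWithin 0 (Ioi 0)) (𝓝 1) := by
    have : Continuous (fun q : ℝ => Real.sqrt (1 - q * t ^ 2)) := by continuity
    have h0 := (this.tendsto 0).mono_left
      (nhdsWithin_le_nhds : nhdsWithin (0:ℝ) (Ioi 0) ≤ 𝓝 0)
    simpa using h0
  have h1 : Tendsto (fun q : ℝ => t ^ 2 / (1 + Real.sqrt (1 - q * t ^ 2)))
      (nhdsWithin 0 (Ioi 0)) (𝓝 (t ^ 2 / 2)) := by
    have h := Tendsto.div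
      (tendsto_const_nhds : Tendsto (fun _ : ℝ => t ^ 2) (nhdsWithin 0 (Ioi 0)) (𝓝 (t ^ 2)))
      (tendsto_const_nhds.add hs) (by norm_num : (1:ℝ) + 1 ≠ 0)
    simpa [show (1:ℝ) + 1 = 2 by norm_num, Pi.div_def] using h
  have h2 : Tendsto (fun q : ℝ => t ^ 2 / (1 + t ^ 2 / (1 + Real.sqrt (1 - q * t ^ 2))) ^ 3)
      (nhdsWithin 0 (Ioi 0)) (𝓝 (phi13 t)) := by
    unfold phi13
    exact tendsto_const_nhds.div ((tendsto_const_nhds.add h1).pow 3)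
      (pow_ne_zero 3 (phi13_denom_pos t).ne')
  apply h2.congr'
  have hmem : Ioo (0:ℝ) (1 / (4 * t ^ 2 + 1)) ∈ nhdsWithin (0:ℝ) (Ioi 0) :=
    Ioo_mem_nhdsGT_of_mem ⟨le_refl 0, by positivity⟩
  filter_upwards [hmem] with q hq
  obtain ⟨hq0, hq1⟩ := hq
  have hqt : q * t ^ 2 < 1 / 4 := by
    rw [lt_div_iff₀ (by positivity)] at hq1
    nlinarith
  have hsq : (0:ℝ) < Real.sqrt q := Real.sqrt_pos.mpr hq0
  have habs : |t| < 1 / (2 * Real.sqrt q) := by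
    rw [lt_div_iff₀ (by positivity)]
    nlinarith [Real.sq_sqrt hq0.le, sq_abs t, abs_nonneg t,
      sq_nonneg (2 * Real.sqrt q * |t| - 1), Real.sqrt_nonneg q]
  have ht : t ∈ Ioc (-(1 / (2 * Real.sqrt q))) (1 / (2 * Real.sqrt q)) := by
    constructor
    · linarith [abs_le.mp habs.le |>.1, neg_abs_le t]
    · linarith [le_abs_self t]
  rw [F13, Set.indicator_of_mem ht]
  have hss : Real.sqrt (1 - q * t ^ 2) ^ 2 = 1 - q * t ^ 2 :=
    Real.sq_sqrt (by linarith)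
  have hsp : (0:ℝ) < 1 + Real.sqrt (1 - q * t ^ 2) := by positivity
  have heq : t ^ 2 / (1 + Real.sqrt (1 - q * t ^ 2))
      = (1 - Real.sqrt (1 - q * t ^ 2)) / q := by
    rw [div_eq_div_iff hsp.ne' hq0.ne']
    nlinarith [hss]
  rw [heq]

lemma subst13 {q : ℝ} (hq : 0 < q) :
    q ^ ((3:ℝ)/2) * ∫ x in (-(1:ℝ)/2)..(1/2), x ^ 2 / (1 + q - Real.sqrt (1 - x ^ 2)) ^ 3
      = ∫ t, F13 q t := by
  have hc : (0:ℝ) < Real.sqrt q := Real.sqrt_pos.mpr hq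
  set c := Real.sqrt q with hcdef
  have hc2 : c ^ 2 = q := Real.sq_sqrt hq.le
  have hq32 : q ^ ((3:ℝ)/2) = c ^ 3 := by
    rw [hcdef, Real.sqrt_eq_rpow, ← Real.rpow_natCast (q ^ ((1:ℝ)/2)) 3,
      ← Real.rpow_mul hq.le]
    norm_num
  have hend1 : c * (-(1 / (2 * c))) = -(1:ℝ)/2 := by field_simp
  have hend2 : c * (1 / (2 * c)) = (1:ℝ)/2 := by field_simp
  have key := intervalIntegral.smul_integral_comp_mul_left
    (fun x => x ^ 2 / (1 + q - Real.sqrt (1 - x ^ 2)) ^ 3)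
    (a := -(1 / (2 * c))) (b := 1 / (2 * c)) c
  rw [hend1, hend2] at key
  have hab : -(1 / (2 * c)) ≤ 1 / (2 * c) := by
    have : (0:ℝ) < 1 / (2 * c) := by positivity
    linarith
  have hpt : ∀ t : ℝ, c ^ 3 * (c * t) ^ 2 / (1 + q - Real.sqrt (1 - (c * t) ^ 2)) ^ 3 * c
      = t ^ 2 / (1 + (1 - Real.sqrt (1 - q * t ^ 2)) / q) ^ 3 := by
    intro t
    have h1 : (c * t) ^ 2 = q * t ^ 2 := by rw [mul_pow, hc2]
    rw [h1]
    have hs1 : Real.sqrt (1 - q * t ^ 2) ≤ 1 := Real.sqrt_le_one.mpr (by nlinarith)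
    have hs0 : 0 ≤ Real.sqrt (1 - q * t ^ 2) := Real.sqrt_nonneg _
    have hden : (0:ℝ) < 1 + q - Real.sqrt (1 - q * t ^ 2) := by linarith
    have hc4 : c ^ 3 * c = q ^ 2 := by rw [← hc2]; ring
    have : (1 + (1 - Real.sqrt (1 - q * t ^ 2)) / q) ^ 3
        = (1 + q - Real.sqrt (1 - q * t ^ 2)) ^ 3 / q ^ 3 := by
      rw [← div_pow]
      congr 1
      field_simp
      ring
    rw [this, show c ^ 3 * (q * t ^ 2) / (1 + q - Real.sqrt (1 - q * t ^ 2)) ^ 3 * c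
        = q ^ 2 * (q * t ^ 2) / (1 + q - Real.sqrt (1 - q * t ^ 2)) ^ 3 from by
      rw [← hc4]; ring, div_div_eq_mul_div,
      div_eq_div_iff (pow_ne_zero 3 hden.ne') (pow_ne_zero 3 hden.ne')]
    ring
  calc q ^ ((3:ℝ)/2) * ∫ x in (-(1:ℝ)/2)..(1/2), x ^ 2 / (1 + q - Real.sqrt (1 - x ^ 2)) ^ 3
      = c ^ 3 * (c • ∫ t in (-(1 / (2 * c)))..(1 / (2 * c)),
          (c * t) ^ 2 / (1 + q - Real.sqrt (1 - (c * t) ^ 2)) ^ 3) := by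
        rw [key, hq32]
    _ = ∫ t in (-(1 / (2 * c)))..(1 / (2 * c)),
          t ^ 2 / (1 + (1 - Real.sqrt (1 - q * t ^ 2)) / q) ^ 3 := by
        rw [smul_eq_mul, ← mul_assoc, ← intervalIntegral.integral_const_mul]
        apply intervalIntegral.integral_congr
        intro t _
        simp only
        rw [← hpt t]
        ring
    _ = ∫ t in Ioc (-(1 / (2 * c))) (1 / (2 * c)),
          t ^ 2 / (1 + (1 - Real.sqrt (1 - q * t ^ 2)) / q) ^ 3 :=
        intervalIntegral.integral_of_le hab
    _ = ∫ t, F13 q t := (integral_indicator measurableSet_Ioc).symm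

/-- Asymptotics of the lubrication energy lower bound
`m_D(q) = 12 ∫_{-1/2}^{1/2} x²/(1+q-√(1-x²))³ dx` as `q → 0⁺`:
`q^{3/2} m_D(q) → 3√2 π`, i.e. `m_D(q) = 3√2 π (1+ε(q))/q^{3/2}` with
`ε(q) → 0`. -/
theorem stmt_13 :
    Tendsto
      (fun q : ℝ => q ^ ((3:ℝ)/2) *
        (12 * ∫ x in (-(1:ℝ)/2)..(1/2), x ^ 2 / (1 + q - Real.sqrt (1 - x ^ 2)) ^ 3))
      (nhdsWithin 0 (Ioi 0)) (nhds (3 * Real.sqrt 2 * Real.pi)) := by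
  have hmeas : ∀ᶠ q in nhdsWithin (0:ℝ) (Ioi 0), AEStronglyMeasurable (F13 q) volume := by
    filter_upwards [self_mem_nhdsWithin] with q hq
    exact ((F13_cont hq).aestronglyMeasurable).indicator measurableSet_Ioc
  have hbound : ∀ᶠ q in nhdsWithin (0:ℝ) (Ioi 0),
      ∀ᵐ t : ℝ, ‖F13 q t‖ ≤ phi13 t := by
    filter_upwards [self_mem_nhdsWithin] with q hq
    exact Filter.Eventually.of_forall (F13_bound hq)
  have hlim : ∀ᵐ t : ℝ, Tendsto (fun q => F13 q t) (nhdsWithin 0 (Ioi 0)) (𝓝 (phi13 t)) :=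
    Filter.Eventually.of_forall F13_tendsto
  have key := MeasureTheory.tendsto_integral_filter_of_dominated_convergence
    phi13 hmeas hbound phi13_integrable hlim
  have key2 := key.const_mul (12:ℝ)
  rw [integral_phi13, show (12:ℝ) * (Real.sqrt 2 * π / 4) = 3 * Real.sqrt 2 * π by ring]
    at key2
  apply key2.congr'
  filter_upwards [self_mem_nhdsWithin] with q hq
  rw [← subst13 hq]
  ring
end
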